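/- arXiv:1906.06800 — 6 statements merged into one kernel-verified Lean document; each statement's English description precedes it below -/
import Mathlib

section
/- For any two idempotent probability measures μ_1, μ_2 on a compact Hausdorff space X, the set Λ(μ_1, μ_2) = {ξ ∈ I(X × X) : I(π_i)(ξ) = μ_i for i = 1, 2} of admissible measures is nonempty, where π_i : X × X → X are the coordinate projections. -/
/-- An idempotent probability measure on `X`: a functional on `C(X, ℝ)` preserving constants,
shifting under addition of constants, and turning pointwise max into max. -/
def IsIPM (X : Type*) [TopologicalSpace X] (μ : C(X, ℝ) → ℝ) : Prop :=
  (∀ c : ℝ, μ (ContinuousMap.const X c) = c) ∧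
  (∀ (φ : C(X, ℝ)) (c : ℝ), μ (φ + ContinuousMap.const X c) = μ φ + c) ∧
  (∀ φ ψ : C(X, ℝ), μ (φ ⊔ ψ) = max (μ φ) (μ ψ))

/-- Pushforward of a functional along a continuous map: `I(f)(μ)(φ) = μ(φ ∘ f)`. -/
def IPMmap {X Y : Type*} [TopologicalSpace X] [TopologicalSpace Y]
    (f : C(X, Y)) (μ : C(X, ℝ) → ℝ) : C(Y, ℝ) → ℝ :=
  fun φ => μ (φ.comp f)

lemma ipm_mono {X : Type*} [TopologicalSpace X] {μ : C(X, ℝ) → ℝ} (h : IsIPM X μ)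
    {φ ψ : C(X, ℝ)} (hle : φ ≤ ψ) : μ φ ≤ μ ψ := by
  have := h.2.2 φ ψ
  rw [sup_eq_right.mpr hle] at this
  rw [this]; exact le_max_left _ _

lemma ipm_lip {X : Type*} [TopologicalSpace X] [CompactSpace X] {μ : C(X, ℝ) → ℝ}
    (h : IsIPM X μ) : Continuous μ := by
  have key : ∀ φ ψ : C(X, ℝ), μ φ ≤ μ ψ + dist φ ψ := by
    intro φ ψ
    have hle : φ ≤ ψ + ContinuousMap.const X (dist φ ψ) := by
      rw [ContinuousMap.le_def]
      intro x
      have hd := ContinuousMap.dist_apply_le_dist (f := φ) (g := ψ) x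
      have h2 := abs_le.mp (by rwa [Real.dist_eq] at hd)
      simp only [ContinuousMap.add_apply, ContinuousMap.const_apply]
      linarith [h2.2]
    calc μ φ ≤ μ (ψ + ContinuousMap.const X (dist φ ψ)) := ipm_mono h hle
      _ = μ ψ + dist φ ψ := h.2.1 _ _
  have lip : LipschitzWith 1 μ := by
    apply LipschitzWith.of_dist_le_mul
    intro φ ψ
    rw [NNReal.coe_one, one_mul, Real.dist_eq, abs_le]
    constructor
    · have := key ψ φ; rw [dist_comm] at this; linarith
    · have := key φ ψ; linarith
  exact lip.continuous

/-- The set `Λ(μ₁, μ₂)` of admissible measures on `X × X` with marginals `μ₁, μ₂`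
is nonempty. -/
theorem adm_nonempty {X : Type*} [TopologicalSpace X] [CompactSpace X] [T2Space X]
    (μ₁ μ₂ : C(X, ℝ) → ℝ) (h₁ : IsIPM X μ₁) (h₂ : IsIPM X μ₂) :
    ∃ ξ : C(X × X, ℝ) → ℝ, IsIPM (X × X) ξ ∧
      IPMmap ContinuousMap.fst ξ = μ₁ ∧ IPMmap ContinuousMap.snd ξ = μ₂ := by
  set inner : C(X × X, ℝ) → C(X, ℝ) := fun φ =>
    ⟨fun x => μ₂ (φ.curry x), (ipm_lip h₂).comp φ.curry.continuous⟩ with hinner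
  refine ⟨fun φ => μ₁ (inner φ), ⟨?_, ?_, ?_⟩, ?_, ?_⟩
  · intro c
    have : inner (ContinuousMap.const (X × X) c) = ContinuousMap.const X c := by
      ext x
      simp only [hinner, ContinuousMap.coe_mk, ContinuousMap.const_apply]
      have : (ContinuousMap.const (X × X) c).curry x = ContinuousMap.const X c := by
        ext y; rfl
      rw [this, h₂.1]
    show μ₁ _ = c
    rw [this, h₁.1]
  · intro φ c
    have : inner (φ + ContinuousMap.const (X × X) c) = inner φ + ContinuousMap.const X c := by
      ext x
      simp only [hinner, ContinuousMap.coe_mk, ContinuousMap.add_apply,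
        ContinuousMap.const_apply]
      have : (φ + ContinuousMap.const (X × X) c).curry x
          = φ.curry x + ContinuousMap.const X c := by ext y; rfl
      rw [this, h₂.2.1]
    show μ₁ _ = μ₁ _ + c
    rw [this, h₁.2.1]
  · intro φ ψ
    have : inner (φ ⊔ ψ) = inner φ ⊔ inner ψ := by
      ext x
      simp only [hinner, ContinuousMap.coe_mk, ContinuousMap.sup_apply]
      have : (φ ⊔ ψ).curry x = φ.curry x ⊔ ψ.curry x := by
        ext y; simp [ContinuousMap.sup_apply]
      rw [this, h₂.2.2]
    show μ₁ _ = max (μ₁ _) (μ₁ _)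
    rw [this, h₁.2.2]
  · funext φ
    show μ₁ (inner ((φ.comp ContinuousMap.fst))) = μ₁ φ
    congr 1
    ext x
    simp only [hinner, ContinuousMap.coe_mk]
    have : (φ.comp ContinuousMap.fst).curry x = ContinuousMap.const X (φ x) := by
      ext y; rfl
    rw [this, h₂.1]
  · funext φ
    show μ₁ (inner ((φ.comp ContinuousMap.snd))) = μ₂ φ
    have : inner (φ.comp ContinuousMap.snd) = ContinuousMap.const X (μ₂ φ) := by
      ext x
      simp only [hinner, ContinuousMap.coe_mk, ContinuousMap.const_apply]
      have hc : (φ.comp ContinuousMap.snd).curry x = φ := by ext y; rfl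
      rw [hc]
    rw [this, h₁.1]
end

section
/- On a metric compactum (X, ρ), the function ρ_I(μ_1, μ_2) = inf{ sup{ ρ(x, y) : (x, y) ∈ supp ξ } : ξ ∈ Λ(μ_1, μ_2) } defines a metric on the space I(X) of idempotent probability measures. -/
/-- The support of `μ`: intersection of all closed `A ⊆ X` such that `μ` comes from an
idempotent probability measure on `A`. -/
def IPMsupp {X : Type*} [TopologicalSpace X] (μ : C(X, ℝ) → ℝ) : Set X :=
  ⋂₀ {A : Set X | IsClosed A ∧ ∃ ν : C(A, ℝ) → ℝ, IsIPM A ν ∧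
      ∀ φ : C(X, ℝ), μ φ = ν (φ.restrict A)}

/-- The set `Λ(μ₁, μ₂)` of admissible measures on `X × X` with marginals `μ₁`, `μ₂`. -/
def AdmSet {X : Type*} [TopologicalSpace X] (μ₁ μ₂ : C(X, ℝ) → ℝ) :
    Set (C(X × X, ℝ) → ℝ) :=
  {ξ | IsIPM (X × X) ξ ∧ IPMmap ContinuousMap.fst ξ = μ₁ ∧ IPMmap ContinuousMap.snd ξ = μ₂}

/-- `ρ_I(μ₁, μ₂) = inf { sup { d(x,y) : (x,y) ∈ supp ξ } : ξ ∈ Λ(μ₁, μ₂) }`,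
with respect to a distance function `d` on `X`. -/
noncomputable def rhoID {X : Type*} [TopologicalSpace X] (d : X → X → ℝ)
    (μ₁ μ₂ : C(X, ℝ) → ℝ) : ℝ :=
  sInf ((fun ξ => sSup ((fun p : X × X => d p.1 p.2) '' IPMsupp ξ)) '' AdmSet μ₁ μ₂)

/-!
An idempotent probability measure `μ` on a compactum has a max-plus density
`λ y = inf_φ (μ φ - φ y) ∈ [-∞, 0]` with `μ φ = sup_y (λ y + φ y)`, and every point with
`λ y > -∞` lies in the support. Couplings can therefore be built from densities on `X × X` with
prescribed fibrewise suprema: the diagonal density gives `ρ_I(μ, μ) = 0`, the swapped density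
gives symmetry, and the max-plus gluing `λ₁ (x, y) - λ_ν y + λ₂ (y, z)` of two nearly optimal
couplings gives the triangle inequality. If `ρ_I(μ, ν) = 0`, there are couplings concentrated
arbitrarily close to the diagonal, and uniform continuity of `φ` forces `μ φ = ν φ`.
-/

open Set

namespace EReal

theorem iSup_add {ι : Sort*} (f : ι → EReal) (c : EReal) : (⨆ i, f i) + c = ⨆ i, (f i + c) := by
  rcases eq_or_ne c ⊥ with rfl | hc
  · simp
  rcases eq_or_ne (⨆ i, f i) ⊥ with hf | hf
  · simp [iSup_eq_bot.1 hf]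
  refine Monotone.map_iSup_of_continuousAt (f := (· + c)) ?_
    (fun a b hab => add_le_add_left hab c) (bot_add c)
  exact (continuousAt_add (Or.inr hc) (Or.inl hf)).comp
    (continuous_id.prodMk continuous_const).continuousAt

theorem add_iSup {ι : Sort*} (f : ι → EReal) (c : EReal) : c + ⨆ i, f i = ⨆ i, (c + f i) := by
  simp only [add_comm c, iSup_add]

theorem sub_add_cancel_of_le {a b : EReal} (hab : a ≤ b) (hb : b ≠ ⊤) : a - b + b = a := by
  induction b using EReal.rec with
  | bot => simp [le_bot_iff.1 hab]
  | coe b => exact EReal.sub_add_cancel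
  | top => exact absurd rfl hb

end EReal

section Density

variable {Y : Type*} [TopologicalSpace Y] {μ : C(Y, ℝ) → ℝ}

/-- The max-plus density of `μ`: the largest `l` with `l y + φ y ≤ μ φ` for all `φ`. It is
`EReal`-valued because it is `⊥` off the support. -/
noncomputable def IPMdensity (μ : C(Y, ℝ) → ℝ) (y : Y) : EReal :=
  ⨅ φ : C(Y, ℝ), ((μ φ - φ y : ℝ) : EReal)

/-- The `toReal` is harmless: the supremum is finite whenever `⨆ y, l y = 0`. -/
noncomputable def IPMofDensity (l : Y → EReal) (φ : C(Y, ℝ)) : ℝ :=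
  (⨆ y, l y + (φ y : EReal)).toReal

theorem IsIPM.nonempty (hμ : IsIPM Y μ) : Nonempty Y := by
  by_contra hY
  have h01 : ContinuousMap.const Y (0 : ℝ) = ContinuousMap.const Y 1 := by
    ext y; exact absurd ⟨y⟩ hY
  have h := congrArg μ h01
  rw [hμ.1, hμ.1] at h
  exact zero_ne_one h

theorem IsIPM.mono (hμ : IsIPM Y μ) {f g : C(Y, ℝ)} (hfg : f ≤ g) : μ f ≤ μ g := by
  simpa [sup_eq_right.2 hfg] using (hμ.2.2 f g).ge

theorem IPMdensity_add_le (y : Y) (φ : C(Y, ℝ)) : IPMdensity μ y + φ y ≤ μ φ := by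
  calc IPMdensity μ y + φ y ≤ ((μ φ - φ y : ℝ) : EReal) + φ y := by
        gcongr; exact iInf_le _ φ
    _ = μ φ := by rw [← EReal.coe_add, sub_add_cancel]

theorem IsIPM.density_nonpos (hμ : IsIPM Y μ) (y : Y) : IPMdensity μ y ≤ 0 := by
  have h := IPMdensity_add_le (μ := μ) y (ContinuousMap.const Y 0)
  rwa [hμ.1, ContinuousMap.const_apply, EReal.coe_zero, add_zero] at h

theorem isOpen_setOf_IPMdensity_lt (μ : C(Y, ℝ) → ℝ) (c : EReal) :
    IsOpen {y | IPMdensity μ y < c} := by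
  simp only [IPMdensity, iInf_lt_iff, ofPred_exists]
  exact isOpen_iUnion fun φ => isOpen_lt (continuous_coe_real_ereal.comp (by fun_prop))
    continuous_const

theorem IsIPM.apply_le_of_forall_exists [CompactSpace Y] (hμ : IsIPM Y μ) (φ : C(Y, ℝ))
    (c : ℝ) (h : ∀ y, ∃ ψ : C(Y, ℝ), φ y < ψ y + (c - μ ψ)) : μ φ ≤ c := by
  set g : C(Y, ℝ) → C(Y, ℝ) := fun ψ => ψ + ContinuousMap.const Y (c - μ ψ)
  obtain ⟨t, ht⟩ := isCompact_univ.elim_finite_subcover (fun ψ => {y | φ y < g ψ y})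
    (fun ψ => isOpen_lt φ.continuous (g ψ).continuous) fun y _ => mem_iUnion.2 (h y)
  have hcover : ∀ y, ∃ ψ ∈ t, φ y < g ψ y := fun y => by simpa using ht (mem_univ y)
  obtain ⟨y₀⟩ := hμ.nonempty
  have ht₀ : t.Nonempty := ⟨_, (hcover y₀).choose_spec.1⟩
  calc μ φ ≤ μ (t.sup' ht₀ g) := hμ.mono fun y => by
        obtain ⟨ψ, hψ, hy⟩ := hcover y
        exact hy.le.trans (Finset.le_sup' g hψ y)
    _ = c := by
        rw [Finset.apply_sup'_eq_sup'_comp ht₀ μ hμ.2.2]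
        convert Finset.sup'_const ht₀ c with ψ
        simp [g, hμ.2.1]

theorem IsIPM.iSup_density_add [CompactSpace Y] (hμ : IsIPM Y μ) (φ : C(Y, ℝ)) :
    ⨆ y, IPMdensity μ y + φ y = μ φ := by
  refine le_antisymm (iSup_le fun y => IPMdensity_add_le y φ) ?_
  refine EReal.le_of_forall_lt_iff_le.1 fun c hc => EReal.coe_le_coe_iff.2 ?_
  refine hμ.apply_le_of_forall_exists φ c fun y => ?_
  have hy : IPMdensity μ y < ((c - φ y : ℝ) : EReal) := by
    rw [EReal.coe_sub, EReal.lt_sub_iff_add_lt (by simp) (by simp)]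
    exact (le_iSup (fun y => IPMdensity μ y + φ y) y).trans_lt hc
  obtain ⟨ψ, hψ⟩ := iInf_lt_iff.1 hy
  exact ⟨ψ, by linarith [EReal.coe_lt_coe_iff.1 hψ]⟩

theorem IsIPM.iSup_density [CompactSpace Y] (hμ : IsIPM Y μ) : ⨆ y, IPMdensity μ y = 0 := by
  simpa only [hμ.1, ContinuousMap.const_apply, EReal.coe_zero, add_zero]
    using hμ.iSup_density_add (ContinuousMap.const Y 0)

theorem IsIPM.apply_le_apply_of_density [CompactSpace Y] (hμ : IsIPM Y μ) {f g : C(Y, ℝ)}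
    (hfg : ∀ y, IPMdensity μ y ≠ ⊥ → f y ≤ g y) : μ f ≤ μ g := by
  rw [← EReal.coe_le_coe_iff, ← hμ.iSup_density_add, ← hμ.iSup_density_add]
  refine iSup_mono fun y => ?_
  by_cases hy : IPMdensity μ y = ⊥
  · simp [hy]
  · gcongr
    exact hfg y hy

theorem IsIPM.ofDensity_density [CompactSpace Y] (hμ : IsIPM Y μ) :
    IPMofDensity (IPMdensity μ) = μ :=
  funext fun φ => by rw [IPMofDensity, hμ.iSup_density_add, EReal.toReal_coe]

theorem IPMdensity_le_IPMdensity_IPMmap {Z : Type*} [TopologicalSpace Z] (f : C(Y, Z)) (y : Y) :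
    IPMdensity μ y ≤ IPMdensity (IPMmap f μ) (f y) :=
  le_iInf fun φ => iInf_le _ (φ.comp f)

theorem IsIPM.density_IPMmap [CompactSpace Y] {Z : Type*} [TopologicalSpace Z]
    [CompletelyRegularSpace Z] [T2Space Z] (hμ : IsIPM Y μ) (f : C(Y, Z)) (z : Z) :
    IPMdensity (IPMmap f μ) z = ⨆ (y) (_ : f y = z), IPMdensity μ y := by
  refine le_antisymm ?_ (iSup₂_le fun y hy => hy ▸ IPMdensity_le_IPMdensity_IPMmap f y)
  refine EReal.le_of_forall_lt_iff_le.1 fun c hc => ?_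
  set B := f '' {y | IPMdensity μ y < c}ᶜ
  have hB : IsClosed B :=
    ((isOpen_setOf_IPMdensity_lt μ c).isClosed_compl.isCompact.image f.continuous).isClosed
  have hzB : z ∉ B := by
    rintro ⟨y, hy, rfl⟩
    exact hy ((le_iSup₂ (f := fun y' (_ : f y' = f y) => IPMdensity μ y') y rfl).trans_lt hc)
  obtain ⟨g, hg, hgz, hgB⟩ := CompletelyRegularSpace.completely_regular z B hB hzB
  -- `ψ` vanishes at `z` and is so negative on `B` that only points of density `< c` count
  let ψ : C(Z, ℝ) := ⟨fun w => -(|c| * g w), by fun_prop⟩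
  have hψ : μ (ψ.comp f) ≤ c := by
    rw [← EReal.coe_le_coe_iff, ← hμ.iSup_density_add]
    refine iSup_le fun y => ?_
    by_cases hy : IPMdensity μ y < c
    · calc IPMdensity μ y + ψ (f y) ≤ c + ((0 : ℝ) : EReal) :=
            add_le_add hy.le (EReal.coe_le_coe_iff.2
              (neg_nonpos.2 (mul_nonneg (abs_nonneg c) (g (f y)).2.1)))
        _ = c := by simp
    · calc IPMdensity μ y + ψ (f y) ≤ 0 + ((-|c| : ℝ) : EReal) :=
            add_le_add (hμ.density_nonpos y) (by simp [ψ, hgB ⟨y, hy, rfl⟩])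
        _ ≤ c := by rw [zero_add]; exact EReal.coe_le_coe_iff.2 (neg_abs_le c)
  calc IPMdensity (IPMmap f μ) z ≤ ((IPMmap f μ ψ - ψ z : ℝ) : EReal) := iInf_le _ ψ
    _ ≤ c := by simpa [ψ, hgz, IPMmap] using hψ

theorem mem_IPMsupp_of_IPMdensity_ne_bot [CompletelyRegularSpace Y] {y : Y}
    (hy : IPMdensity μ y ≠ ⊥) : y ∈ IPMsupp μ := by
  refine mem_sInter.2 fun A ⟨hA, ν, hν, hμν⟩ => by_contra fun hyA => hy ?_
  obtain ⟨g, hg, hgy, hgA⟩ := CompletelyRegularSpace.completely_regular y A hA hyA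
  refine (EReal.eq_bot_iff_forall_lt _).2 fun b => ?_
  let φ : C(Y, ℝ) := ⟨fun w => (|b| + 1) * (1 - g w), by fun_prop⟩
  have hφA : φ.restrict A = ContinuousMap.const A 0 := by
    ext a
    simp [φ, hgA a.2]
  calc IPMdensity μ y ≤ ((μ φ - φ y : ℝ) : EReal) := iInf_le _ φ
    _ < b := by
        rw [hμν, hφA, hν.1, EReal.coe_lt_coe_iff]
        simp only [φ, ContinuousMap.coe_mk, hgy, Set.Icc.coe_zero]
        linarith [neg_abs_le b]

section OfDensity

variable [CompactSpace Y] {l : Y → EReal}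

theorem coe_IPMofDensity (hl : ⨆ y, l y = 0) (φ : C(Y, ℝ)) :
    (IPMofDensity l φ : EReal) = ⨆ y, l y + φ y := by
  have hφ : ∀ y, |φ y| ≤ ‖φ‖ := fun y => by simpa using φ.norm_coe_le_norm y
  have hub : ⨆ y, l y + φ y ≤ ((‖φ‖ : ℝ) : EReal) :=
    calc ⨆ y, l y + φ y ≤ ⨆ y, l y + ((‖φ‖ : ℝ) : EReal) :=
          iSup_mono fun y => by gcongr; exact (le_abs_self _).trans (hφ y)
      _ = ‖φ‖ := by rw [← EReal.iSup_add, hl, zero_add]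
  have hlb : ((-‖φ‖ : ℝ) : EReal) ≤ ⨆ y, l y + φ y :=
    calc ((-‖φ‖ : ℝ) : EReal) = ⨆ y, l y + ((-‖φ‖ : ℝ) : EReal) := by
          rw [← EReal.iSup_add, hl, zero_add]
      _ ≤ ⨆ y, l y + φ y := iSup_mono fun y => by gcongr; exact neg_le_of_abs_le (hφ y)
  exact EReal.coe_toReal (hub.trans_lt (EReal.coe_lt_top _)).ne
    ((EReal.bot_lt_coe _).trans_le hlb).ne'

theorem isIPM_IPMofDensity (hl : ⨆ y, l y = 0) : IsIPM Y (IPMofDensity l) := by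
  refine ⟨fun c => ?_, fun φ c => ?_, fun φ ψ => ?_⟩ <;> apply EReal.coe_injective <;>
    simp only [coe_IPMofDensity hl]
  · simp only [ContinuousMap.const_apply]
    rw [← EReal.iSup_add, hl, zero_add]
  · simp only [ContinuousMap.add_apply, ContinuousMap.const_apply, EReal.coe_add,
      coe_IPMofDensity hl, EReal.iSup_add, add_assoc]
  · simp only [ContinuousMap.sup_apply, EReal.coe_strictMono.monotone.map_max,
      coe_IPMofDensity hl, ← iSup_sup_eq]
    exact iSup_congr fun y => (add_right_mono (a := l y)).map_max

theorem IPMsupp_IPMofDensity_subset (hl : ⨆ y, l y = 0) {A : Set Y} (hA : IsClosed A)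
    (hlA : ∀ y, l y ≠ ⊥ → y ∈ A) : IPMsupp (IPMofDensity l) ⊆ A := by
  have : CompactSpace A := isCompact_iff_compactSpace.1 hA.isCompact
  have iSup_restrict : ∀ g : Y → EReal, (∀ y, g y ≠ ⊥ → l y ≠ ⊥) → ⨆ a : A, g a = ⨆ y, g y :=
    fun g hg => le_antisymm (iSup_le fun a => le_iSup g a) <| iSup_le fun y => by
      by_cases hy : g y = ⊥
      · exact hy ▸ bot_le
      · exact le_iSup (fun a : A => g a) ⟨y, hlA y (hg y hy)⟩
  have hlA' : ⨆ a : A, l a = 0 := (iSup_restrict l fun _ => id).trans hl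
  refine sInter_subset_of_mem ⟨hA, IPMofDensity fun a : A => l a, isIPM_IPMofDensity hlA',
    fun φ => ?_⟩
  simp only [IPMofDensity, ContinuousMap.restrict_apply]
  rw [iSup_restrict fun y => l y + φ y]
  intro y hy hly
  exact hy (by rw [hly, EReal.bot_add])

end OfDensity

theorem IPMmap_fst_IPMofDensity {X Z : Type*} [TopologicalSpace X] [TopologicalSpace Z]
    (l : X × Z → EReal) :
    IPMmap ContinuousMap.fst (IPMofDensity l) = IPMofDensity fun x => ⨆ z, l (x, z) :=
  funext fun φ => by
    simp only [IPMmap, IPMofDensity, ContinuousMap.comp_apply, ContinuousMap.fst_apply, iSup_prod,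
      EReal.iSup_add]

theorem IPMmap_snd_IPMofDensity {X Z : Type*} [TopologicalSpace X] [TopologicalSpace Z]
    (l : X × Z → EReal) :
    IPMmap ContinuousMap.snd (IPMofDensity l) = IPMofDensity fun z => ⨆ x, l (x, z) :=
  funext fun φ => by
    simp only [IPMmap, IPMofDensity, ContinuousMap.comp_apply, ContinuousMap.snd_apply, iSup_prod,
      EReal.iSup_add]
    rw [iSup_comm]

end Density

section Glue

variable {X Y Z : Type*} {a : X × Y → EReal} {b : Y × Z → EReal} {n : Y → EReal}

/-- The max-plus analogue of gluing two couplings along their common marginal, whose density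
is `n`. -/
noncomputable def densityGlue (a : X × Y → EReal) (b : Y × Z → EReal) (n : Y → EReal)
    (p : X × Z) : EReal :=
  ⨆ y, a (p.1, y) - n y + b (y, p.2)

theorem iSup_densityGlue_left (hn : ∀ y, n y ≠ ⊤) (ha : ∀ y, ⨆ x, a (x, y) = n y)
    (hb : ∀ y, ⨆ z, b (y, z) = n y) (x : X) :
    ⨆ z, densityGlue a b n (x, z) = ⨆ y, a (x, y) := by
  simp only [densityGlue]
  rw [iSup_comm]
  refine iSup_congr fun y => ?_
  rw [← EReal.add_iSup, hb, EReal.sub_add_cancel_of_le ((le_iSup _ x).trans (ha y).le) (hn y)]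

theorem iSup_densityGlue_right (hn : ∀ y, n y ≠ ⊤) (ha : ∀ y, ⨆ x, a (x, y) = n y)
    (hb : ∀ y, ⨆ z, b (y, z) = n y) (z : Z) :
    ⨆ x, densityGlue a b n (x, z) = ⨆ y, b (y, z) := by
  simp only [densityGlue]
  rw [iSup_comm]
  refine iSup_congr fun y => ?_
  have hrw : ∀ x, a (x, y) - n y + b (y, z) = b (y, z) - n y + a (x, y) := fun x => by
    simp only [sub_eq_add_neg]; ac_rfl
  simp only [hrw]
  rw [← EReal.add_iSup, ha, EReal.sub_add_cancel_of_le ((le_iSup _ z).trans (hb y).le) (hn y)]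

theorem exists_ne_bot_of_densityGlue_ne_bot {p : X × Z} (hp : densityGlue a b n p ≠ ⊥) :
    ∃ y, a (p.1, y) ≠ ⊥ ∧ b (y, p.2) ≠ ⊥ := by
  by_contra! h
  refine hp (iSup_eq_bot.2 fun y => ?_)
  by_cases ha : a (p.1, y) = ⊥
  · simp [ha, sub_eq_add_neg]
  · simp [h y ha]

end Glue

section Coupling

variable {X : Type*} [TopologicalSpace X] [CompactSpace X] {μ ν : C(X, ℝ) → ℝ}
  {l : X × X → EReal}

theorem iSup_eq_zero_of_iSup_fst (hμ : IsIPM X μ) (h₁ : ∀ x, ⨆ z, l (x, z) = IPMdensity μ x) :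
    ⨆ p, l p = 0 := by
  rw [iSup_prod]
  simp only [h₁]
  exact hμ.iSup_density

theorem IPMofDensity_mem_AdmSet (hμ : IsIPM X μ) (hν : IsIPM X ν)
    (h₁ : ∀ x, ⨆ z, l (x, z) = IPMdensity μ x) (h₂ : ∀ z, ⨆ x, l (x, z) = IPMdensity ν z) :
    IPMofDensity l ∈ AdmSet μ ν := by
  refine ⟨isIPM_IPMofDensity (iSup_eq_zero_of_iSup_fst hμ h₁), ?_, ?_⟩
  · simp only [IPMmap_fst_IPMofDensity, h₁]
    exact hμ.ofDensity_density
  · simp only [IPMmap_snd_IPMofDensity, h₂]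
    exact hν.ofDensity_density

theorem AdmSet_nonempty (hμ : IsIPM X μ) (hν : IsIPM X ν) : (AdmSet μ ν).Nonempty :=
  ⟨_, IPMofDensity_mem_AdmSet hμ hν (l := fun p => IPMdensity μ p.1 + IPMdensity ν p.2)
    (fun x => by dsimp only; rw [← EReal.add_iSup, hν.iSup_density, add_zero])
    (fun z => by dsimp only; rw [← EReal.iSup_add, hμ.iSup_density, zero_add])⟩

theorem dist_apply_le_of_mem_AdmSet {ξ : C(X × X, ℝ) → ℝ} (hξ : ξ ∈ AdmSet μ ν) {φ : C(X, ℝ)}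
    {ε : ℝ} (h : ∀ p, IPMdensity ξ p ≠ ⊥ → dist (φ p.1) (φ p.2) ≤ ε) :
    dist (μ φ) (ν φ) ≤ ε := by
  have hle : ∀ i j : C(X × X, X), (∀ p, IPMdensity ξ p ≠ ⊥ → φ (i p) ≤ φ (j p) + ε) →
      ξ (φ.comp i) ≤ ξ (φ.comp j) + ε := fun i j hij => by
    rw [← hξ.1.2.1]
    exact hξ.1.apply_le_apply_of_density fun p hp => by simpa using hij p hp
  obtain ⟨-, hμξ, hνξ⟩ := hξ
  subst hμξ hνξ
  rw [Real.dist_eq, abs_sub_le_iff, sub_le_iff_le_add', sub_le_iff_le_add']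
  constructor <;> refine hle _ _ fun p hp => ?_ <;>
    simp only [ContinuousMap.fst_apply, ContinuousMap.snd_apply] <;>
    linarith [abs_sub_le_iff.1 ((Real.dist_eq _ _).symm.trans_le (h p hp))]

variable [T2Space X]

theorem iSup_IPMdensity_fst {ξ : C(X × X, ℝ) → ℝ} (hξ : ξ ∈ AdmSet μ ν) (x : X) :
    ⨆ z, IPMdensity ξ (x, z) = IPMdensity μ x := by
  rw [← hξ.2.1, hξ.1.density_IPMmap]
  simp only [iSup_prod, ContinuousMap.fst_apply]
  rw [iSup_comm]
  simp only [iSup_iSup_eq_left]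

theorem iSup_IPMdensity_snd {ξ : C(X × X, ℝ) → ℝ} (hξ : ξ ∈ AdmSet μ ν) (z : X) :
    ⨆ x, IPMdensity ξ (x, z) = IPMdensity ν z := by
  rw [← hξ.2.2, hξ.1.density_IPMmap]
  simp only [iSup_prod, ContinuousMap.snd_apply, iSup_iSup_eq_left]

end Coupling

theorem rhoID_nonneg {X : Type*} [TopologicalSpace X] {d : X → X → ℝ} (hd : ∀ x y, 0 ≤ d x y)
    (μ ν : C(X, ℝ) → ℝ) : 0 ≤ rhoID d μ ν :=
  Real.sInf_nonneg <| by
    rintro _ ⟨ξ, -, rfl⟩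
    exact Real.sSup_nonneg (by rintro _ ⟨p, -, rfl⟩; exact hd _ _)

section Metric

variable {X : Type*} [MetricSpace X] [CompactSpace X] {μ ν κ : C(X, ℝ) → ℝ}

theorem rhoID_le_of_density (hμ : IsIPM X μ) (hν : IsIPM X ν) {l : X × X → EReal}
    (h₁ : ∀ x, ⨆ z, l (x, z) = IPMdensity μ x) (h₂ : ∀ z, ⨆ x, l (x, z) = IPMdensity ν z)
    {r : ℝ} (hr : 0 ≤ r) (hl : ∀ p, l p ≠ ⊥ → dist p.1 p.2 ≤ r) :
    rhoID (fun x y : X => dist x y) μ ν ≤ r := by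
  have hbdd : BddBelow ((fun ξ => sSup ((fun p : X × X => dist p.1 p.2) '' IPMsupp ξ)) ''
      AdmSet μ ν) := by
    refine ⟨0, ?_⟩
    rintro _ ⟨ξ, -, rfl⟩
    exact Real.sSup_nonneg (by rintro _ ⟨p, -, rfl⟩; exact dist_nonneg)
  refine (csInf_le hbdd ⟨_, IPMofDensity_mem_AdmSet hμ hν h₁ h₂, rfl⟩).trans (Real.sSup_le ?_ hr)
  rintro _ ⟨p, hp, rfl⟩
  exact IPMsupp_IPMofDensity_subset (iSup_eq_zero_of_iSup_fst hμ h₁)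
    (isClosed_le (f := fun p : X × X => dist p.1 p.2) (by fun_prop) continuous_const) hl hp

theorem exists_mem_AdmSet_dist_lt (hμ : IsIPM X μ) (hν : IsIPM X ν) {r : ℝ}
    (hr : rhoID (fun x y : X => dist x y) μ ν < r) :
    ∃ ξ ∈ AdmSet μ ν, ∀ p, IPMdensity ξ p ≠ ⊥ → dist p.1 p.2 < r := by
  obtain ⟨_, ⟨ξ, hξ, rfl⟩, hξr⟩ := exists_lt_of_csInf_lt ((AdmSet_nonempty hμ hν).image _) hr
  have hbdd : BddAbove ((fun p : X × X => dist p.1 p.2) '' IPMsupp ξ) :=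
    (isCompact_univ.image (by fun_prop)).bddAbove.mono (image_mono (subset_univ _))
  exact ⟨ξ, hξ, fun p hp =>
    (le_csSup hbdd ⟨p, mem_IPMsupp_of_IPMdensity_ne_bot hp, rfl⟩).trans_lt hξr⟩

theorem rhoID_self (hμ : IsIPM X μ) : rhoID (fun x y : X => dist x y) μ μ = 0 := by
  refine le_antisymm ?_ (rhoID_nonneg (fun _ _ => dist_nonneg) μ μ)
  refine rhoID_le_of_density hμ hμ (l := fun p => ⨆ _ : p.1 = p.2, IPMdensity μ p.1)
    (fun x => iSup_iSup_eq_right) (fun z => iSup_iSup_eq_left) le_rfl fun p hp => ?_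
  have hdiag : p.1 = p.2 := by
    by_contra h
    exact hp (by simp [h])
  simp [hdiag]

theorem rhoID_comm_le (hμ : IsIPM X μ) (hν : IsIPM X ν) :
    rhoID (fun x y : X => dist x y) ν μ ≤ rhoID (fun x y : X => dist x y) μ ν := by
  refine le_of_forall_gt_imp_ge_of_dense fun r hr => ?_
  obtain ⟨ξ, hξ, hξr⟩ := exists_mem_AdmSet_dist_lt hμ hν hr
  refine rhoID_le_of_density hν hμ (l := fun p => IPMdensity ξ p.swap) (iSup_IPMdensity_snd hξ)
    (iSup_IPMdensity_fst hξ) ((rhoID_nonneg (fun _ _ => dist_nonneg) μ ν).trans hr.le)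
    fun p hp => ?_
  rw [dist_comm]
  exact (hξr _ hp).le

theorem rhoID_comm (hμ : IsIPM X μ) (hν : IsIPM X ν) :
    rhoID (fun x y : X => dist x y) μ ν = rhoID (fun x y : X => dist x y) ν μ :=
  le_antisymm (rhoID_comm_le hν hμ) (rhoID_comm_le hμ hν)

theorem eq_of_rhoID_eq_zero (hμ : IsIPM X μ) (hν : IsIPM X ν)
    (h : rhoID (fun x y : X => dist x y) μ ν = 0) : μ = ν := by
  funext φ
  refine eq_of_forall_dist_le fun ε hε => ?_
  obtain ⟨δ, hδ, hφδ⟩ := Metric.uniformContinuous_iff.1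
    (CompactSpace.uniformContinuous_of_continuous φ.continuous) ε hε
  obtain ⟨ξ, hξ, hξδ⟩ := exists_mem_AdmSet_dist_lt hμ hν (h.trans_lt hδ)
  exact dist_apply_le_of_mem_AdmSet hξ fun p hp => (hφδ (hξδ p hp)).le

theorem rhoID_triangle (hμ : IsIPM X μ) (hν : IsIPM X ν) (hκ : IsIPM X κ) :
    rhoID (fun x y : X => dist x y) μ κ ≤
      rhoID (fun x y : X => dist x y) μ ν + rhoID (fun x y : X => dist x y) ν κ := by
  refine le_of_forall_pos_le_add fun ε hε => ?_
  obtain ⟨ξ₁, hξ₁, hξ₁r⟩ := exists_mem_AdmSet_dist_lt hμ hν (lt_add_of_pos_right _ (half_pos hε))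
  obtain ⟨ξ₂, hξ₂, hξ₂r⟩ := exists_mem_AdmSet_dist_lt hν hκ (lt_add_of_pos_right _ (half_pos hε))
  have hn : ∀ y, IPMdensity ν y ≠ ⊤ := fun y =>
    ((hν.density_nonpos y).trans_lt EReal.zero_lt_top).ne
  have ha := iSup_IPMdensity_snd hξ₁
  have hb := iSup_IPMdensity_fst hξ₂
  have h₁ := rhoID_nonneg (d := fun x y : X => dist x y) (fun _ _ => dist_nonneg) μ ν
  have h₂ := rhoID_nonneg (d := fun x y : X => dist x y) (fun _ _ => dist_nonneg) ν κ
  have hglue : rhoID (fun x y : X => dist x y) μ κ ≤ (rhoID (fun x y : X => dist x y) μ ν + ε / 2)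
      + (rhoID (fun x y : X => dist x y) ν κ + ε / 2) :=
    rhoID_le_of_density hμ hκ (l := densityGlue (IPMdensity ξ₁) (IPMdensity ξ₂) (IPMdensity ν))
      (fun x => (iSup_densityGlue_left hn ha hb x).trans (iSup_IPMdensity_fst hξ₁ x))
      (fun z => (iSup_densityGlue_right hn ha hb z).trans (iSup_IPMdensity_snd hξ₂ z))
      (by positivity) fun p hp => by
        obtain ⟨y, hy₁, hy₂⟩ := exists_ne_bot_of_densityGlue_ne_bot hp
        linarith [dist_triangle p.1 y p.2, hξ₁r _ hy₁, hξ₂r _ hy₂]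
  linarith

end Metric

/-- On a metric compactum, `ρ_I` is a metric on the set of idempotent probability measures:
nonnegative, vanishing exactly on the diagonal, symmetric, and satisfying the triangle
inequality. -/
theorem rhoI_is_metric {X : Type*} [MetricSpace X] [CompactSpace X] :
    (∀ μ ν : C(X, ℝ) → ℝ, IsIPM X μ → IsIPM X ν → 0 ≤ rhoID (fun x y : X => dist x y) μ ν) ∧
    (∀ μ : C(X, ℝ) → ℝ, IsIPM X μ → rhoID (fun x y : X => dist x y) μ μ = 0) ∧
    (∀ μ ν : C(X, ℝ) → ℝ, IsIPM X μ → IsIPM X ν →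
      rhoID (fun x y : X => dist x y) μ ν = rhoID (fun x y : X => dist x y) ν μ) ∧
    (∀ μ ν : C(X, ℝ) → ℝ, IsIPM X μ → IsIPM X ν →
      rhoID (fun x y : X => dist x y) μ ν = 0 → μ = ν) ∧
    (∀ μ ν κ : C(X, ℝ) → ℝ, IsIPM X μ → IsIPM X ν → IsIPM X κ →
      rhoID (fun x y : X => dist x y) μ κ ≤
        rhoID (fun x y : X => dist x y) μ ν + rhoID (fun x y : X => dist x y) ν κ) :=
  ⟨fun μ ν _ _ => rhoID_nonneg (fun _ _ => dist_nonneg) μ ν,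
   fun _ hμ => rhoID_self hμ,
   fun _ _ hμ hν => rhoID_comm hμ hν,
   fun _ _ hμ hν => eq_of_rhoID_eq_zero hμ hν,
   fun _ _ _ hμ hν hκ => rhoID_triangle hμ hν hκ⟩
end

section
/- If i : (X_1, ρ¹) → (X_2, ρ²) is an isometric embedding of compact metric spaces, then I(i) : (I(X_1), ρ¹_I) → (I(X_2), ρ²_I) is an isometric embedding, where ρ_I is the admissible-measure metric on the space of idempotent probability measures. -/
/-!
Say that `μ` depends only on `A` if `μ φ` is determined by `φ` restricted to `A`. By Tietze's
theorem the support is the intersection of the closed sets `μ` depends only on. Idempotence makes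
this family closed under intersections: if `φ ≤ ψ` on `A ∩ B`, then on `A` we have
`φ ≤ max (ψ + ε) g` for an Urysohn function `g` that is huge where `φ ≥ ψ + ε` and equal to
`μ (ψ + ε)` on `B`. By compactness `μ` then depends only on its support, so that
`supp (I f μ) = f (supp μ)` for a closed embedding `f`. The same argument applied to the two
marginals shows that a coupling of `I i μ` and `I i ν` depends only on `range i × range i`, hence
(Tietze again) is the image of a coupling of `μ` and `ν`. Thus `I (i × i)` maps `Λ(μ, ν)` onto
`Λ(I i μ, I i ν)`, and since `i` is an isometry it preserves the supremum of the distance over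
supports: both infima run over the same set of numbers.
-/

open Set Topology ContinuousMap

def DependsOnlyOn {X : Type*} [TopologicalSpace X] (μ : C(X, ℝ) → ℝ) (A : Set X) : Prop :=
  ∀ φ ψ : C(X, ℝ), EqOn φ ψ A → μ φ = μ ψ

section General

variable {X Y : Type*} [TopologicalSpace X] [TopologicalSpace Y] {μ : C(X, ℝ) → ℝ}

theorem IsIPM.map (hμ : IsIPM X μ) (f : C(X, Y)) : IsIPM Y (IPMmap f μ) :=
  ⟨fun c => hμ.1 c, fun φ c => hμ.2.1 (φ.comp f) c, fun φ ψ => hμ.2.2 (φ.comp f) (ψ.comp f)⟩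

theorem dependsOnlyOn_of_forall_le {A : Set X}
    (h : ∀ φ ψ : C(X, ℝ), (∀ x ∈ A, φ x ≤ ψ x) → μ φ ≤ μ ψ) : DependsOnlyOn μ A :=
  fun φ ψ hφψ => le_antisymm (h φ ψ fun _ hx => (hφψ hx).le) (h ψ φ fun _ hx => (hφψ hx).ge)

theorem dependsOnlyOn_univ (μ : C(X, ℝ) → ℝ) : DependsOnlyOn μ univ :=
  fun _ _ h => congrArg μ (ContinuousMap.ext fun x => h (mem_univ x))

theorem DependsOnlyOn.image {A : Set X} (hA : DependsOnlyOn μ A) (f : C(X, Y)) :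
    DependsOnlyOn (IPMmap f μ) (f '' A) :=
  fun _ _ h => hA _ _ fun _ hx => h (mem_image_of_mem f hx)

theorem dependsOnlyOn_IPMmap_range (μ : C(X, ℝ) → ℝ) (f : C(X, Y)) :
    DependsOnlyOn (IPMmap f μ) (range f) :=
  image_univ (f := f) ▸ (dependsOnlyOn_univ μ).image f

theorem IsIPM.le_of_le_on (hμ : IsIPM X μ) {A : Set X} (hA : DependsOnlyOn μ A) {φ ψ : C(X, ℝ)}
    (h : ∀ x ∈ A, φ x ≤ ψ x) : μ φ ≤ μ ψ :=
  calc μ φ ≤ max (μ φ) (μ ψ) := le_max_left _ _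
  _ = μ (φ ⊔ ψ) := (hμ.2.2 φ ψ).symm
  _ = μ ψ := hA _ _ fun x hx => sup_eq_right.2 (h x hx)

theorem IsIPM.le_of_le_sup_comp (hμ : IsIPM X μ) {A : Set X} (hA : DependsOnlyOn μ A) (f : C(X, Y))
    {B : Set Y} (hB : DependsOnlyOn (IPMmap f μ) B) {φ ψ : C(X, ℝ)} {g : C(Y, ℝ)}
    (hgB : ∀ y ∈ B, g y = μ ψ) (h : ∀ x ∈ A, φ x ≤ max (ψ x) (g (f x))) : μ φ ≤ μ ψ :=
  calc μ φ ≤ μ (ψ ⊔ g.comp f) := hμ.le_of_le_on hA h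
  _ = max (μ ψ) (μ (g.comp f)) := hμ.2.2 _ _
  _ = μ ψ := by
    change max (μ ψ) (IPMmap f μ g) = μ ψ
    rw [(hB g (const Y _) hgB).trans ((hμ.map f).1 _), max_self]

theorem isClosed_IPMsupp : IsClosed (IPMsupp μ) :=
  isClosed_sInter fun _ hA => hA.1

section Tietze

variable [NormalSpace Y] {f : C(X, Y)}

theorem IsIPM.exists_IPMmap_eq (hf : IsClosedEmbedding f) {μ : C(Y, ℝ) → ℝ} (hμ : IsIPM Y μ)
    (h : DependsOnlyOn μ (range f)) : ∃ ν, IsIPM X ν ∧ IPMmap f ν = μ := by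
  choose E hE using fun θ : C(X, ℝ) => ContinuousMap.exists_extension hf θ
  have hEf : ∀ θ x, E θ (f x) = θ x := fun θ => ContinuousMap.congr_fun (hE θ)
  have hμE : ∀ θ (g : C(Y, ℝ)), g.comp f = θ → μ (E θ) = μ g := by
    rintro θ g rfl
    refine h _ _ ?_
    rintro - ⟨x, rfl⟩
    exact hEf _ x
  refine ⟨fun θ => μ (E θ), ⟨fun c => ?_, fun θ c => ?_, fun θ θ' => ?_⟩, ?_⟩
  · exact (hμE _ (const Y c) rfl).trans (hμ.1 c)
  · have hext : (E θ + const Y c).comp f = θ + const X c :=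
      ContinuousMap.ext fun x => congrArg (· + c) (hEf θ x)
    exact (hμE _ _ hext).trans (hμ.2.1 (E θ) c)
  · have hext : (E θ ⊔ E θ').comp f = θ ⊔ θ' :=
      ContinuousMap.ext fun x => congrArg₂ max (hEf θ x) (hEf θ' x)
    exact (hμE _ _ hext).trans (hμ.2.2 (E θ) (E θ'))
  · exact funext fun φ => hμE _ φ rfl

theorem IPMmap_injective (hf : IsClosedEmbedding f) : Function.Injective (IPMmap f) := by
  intro μ ν h
  funext φ
  obtain ⟨g, rfl⟩ := ContinuousMap.exists_extension hf φ
  exact congrFun h g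

theorem DependsOnlyOn.preimage (hf : IsClosedEmbedding f) {B : Set Y}
    (hB : DependsOnlyOn (IPMmap f μ) B) (hBf : B ⊆ range f) : DependsOnlyOn μ (f ⁻¹' B) := by
  intro φ ψ h
  obtain ⟨φ', rfl⟩ := ContinuousMap.exists_extension hf φ
  obtain ⟨ψ', rfl⟩ := ContinuousMap.exists_extension hf ψ
  refine hB φ' ψ' fun y hy => ?_
  obtain ⟨x, rfl⟩ := hBf hy
  exact h hy

end Tietze

theorem IsIPM.IPMsupp_eq_sInter [NormalSpace X] (hμ : IsIPM X μ) :
    IPMsupp μ = ⋂₀ {A | IsClosed A ∧ DependsOnlyOn μ A} := by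
  refine congrArg _ (ext fun A => and_congr_right fun hA => ⟨?_, fun h => ?_⟩)
  · rintro ⟨ν, -, hν⟩
    have : μ = IPMmap ⟨Subtype.val, continuous_subtype_val⟩ ν := funext hν
    simpa [this] using dependsOnlyOn_IPMmap_range ν ⟨Subtype.val, continuous_subtype_val⟩
  · obtain ⟨ν, hν, rfl⟩ :=
      hμ.exists_IPMmap_eq (f := ⟨Subtype.val, continuous_subtype_val⟩)
        hA.isClosedEmbedding_subtypeVal (by simpa using h)
    exact ⟨ν, hν, fun _ => rfl⟩

theorem IsIPM.IPMsupp_subset [NormalSpace X] (hμ : IsIPM X μ) {A : Set X} (hAc : IsClosed A)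
    (hA : DependsOnlyOn μ A) : IPMsupp μ ⊆ A :=
  hμ.IPMsupp_eq_sInter ▸ sInter_subset_of_mem ⟨hAc, hA⟩

end General

section Compact

variable {X Y : Type*} [TopologicalSpace X] [TopologicalSpace Y] [CompactSpace X]
  {μ : C(X, ℝ) → ℝ}

theorem IsIPM.dependsOnlyOn_inter_preimage [T2Space Y] [NormalSpace Y] (hμ : IsIPM X μ) {A : Set X}
    (hAc : IsClosed A) (hA : DependsOnlyOn μ A) (f : C(X, Y)) {B : Set Y} (hBc : IsClosed B)
    (hB : DependsOnlyOn (IPMmap f μ) B) : DependsOnlyOn μ (A ∩ f ⁻¹' B) := by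
  refine dependsOnlyOn_of_forall_le fun φ ψ hφψ => le_of_forall_pos_le_add fun ε hε => ?_
  set T := A ∩ {x | ψ x + ε ≤ φ x}
  have hTc : IsClosed (f '' T) :=
    ((hAc.inter (isClosed_le (by fun_prop) (by fun_prop))).isCompact.image f.continuous).isClosed
  have hBT : Disjoint B (f '' T) := by
    refine disjoint_left.2 ?_
    rintro _ hy ⟨x, ⟨hxA, hx⟩, rfl⟩
    linarith [hφψ x ⟨hxA, hy⟩, hx.out]
  obtain ⟨u, hu0, hu1, -⟩ := exists_continuous_zero_one_of_isClosed hBc hTc hBT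
  set c := μ (ψ + const X ε)
  let g : C(Y, ℝ) := const Y c + (‖φ‖ - c) • u
  have hgB : ∀ y ∈ B, g y = c := fun y hy => by simp [g, hu0 hy]
  have hφ : ∀ x ∈ A, φ x ≤ max ((ψ + const X ε) x) (g (f x)) := by
    intro x hx
    by_cases hxT : ψ x + ε ≤ φ x
    · have hg : g (f x) = ‖φ‖ := by simp [g, hu1 (mem_image_of_mem f ⟨hx, hxT⟩)]
      exact le_max_of_le_right (hg ▸ (le_abs_self _).trans (φ.norm_coe_le_norm x))
    · exact le_max_of_le_left (not_le.1 hxT).le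
  calc μ φ ≤ c := hμ.le_of_le_sup_comp hA f hB hgB hφ
  _ = μ ψ + ε := hμ.2.1 ψ ε

theorem IsIPM.dependsOnlyOn_inter [T2Space X] (hμ : IsIPM X μ) {A B : Set X} (hAc : IsClosed A)
    (hA : DependsOnlyOn μ A) (hBc : IsClosed B) (hB : DependsOnlyOn μ B) :
    DependsOnlyOn μ (A ∩ B) :=
  hμ.dependsOnlyOn_inter_preimage hAc hA (ContinuousMap.id X) hBc hB

theorem IsIPM.dependsOnlyOn_IPMsupp [T2Space X] (hμ : IsIPM X μ) : DependsOnlyOn μ (IPMsupp μ) := by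
  refine dependsOnlyOn_of_forall_le fun φ ψ hφψ => le_of_forall_pos_le_add fun ε hε => ?_
  let F := {A : Set X // IsClosed A ∧ DependsOnlyOn μ A}
  have : Nonempty F := ⟨⟨univ, isClosed_univ, dependsOnlyOn_univ μ⟩⟩
  have hTc : IsClosed {x | ψ x + ε ≤ φ x} := isClosed_le (by fun_prop) (by fun_prop)
  have hT : {x | ψ x + ε ≤ φ x} ∩ ⋂ A : F, A.1 = ∅ := by
    refine eq_empty_of_forall_notMem fun x ⟨hxT, hxS⟩ => ?_
    have hx : x ∈ IPMsupp μ := by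
      rw [hμ.IPMsupp_eq_sInter]
      exact mem_sInter.2 fun A hA => mem_iInter.1 hxS ⟨A, hA⟩
    linarith [hφψ x hx, hxT.out]
  have hdir : Directed (· ⊇ ·) fun A : F => A.1 := fun A B =>
    ⟨⟨A.1 ∩ B.1, A.2.1.inter B.2.1, hμ.dependsOnlyOn_inter A.2.1 A.2.2 B.2.1 B.2.2⟩,
      inter_subset_left, inter_subset_right⟩
  obtain ⟨⟨A, _, hA⟩, hTA⟩ :=
    hTc.isCompact.elim_directed_family_closed _ (fun A : F => A.2.1) hT hdir
  calc μ φ ≤ μ (ψ + const X ε) := hμ.le_of_le_on hA fun x hx =>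
        not_lt.1 fun hlt => eq_empty_iff_forall_notMem.1 hTA x ⟨hlt.le, hx⟩
  _ = μ ψ + ε := hμ.2.1 ψ ε

theorem IsIPM.IPMsupp_IPMmap [T2Space X] [CompactSpace Y] [T2Space Y] (hμ : IsIPM X μ)
    {f : C(X, Y)} (hf : IsClosedEmbedding f) : IPMsupp (IPMmap f μ) = f '' IPMsupp μ := by
  have hfμ := hμ.map f
  refine Subset.antisymm ?_ (image_subset_iff.2 ?_)
  · exact hfμ.IPMsupp_subset (isClosed_IPMsupp.isCompact.image f.continuous).isClosed
      (hμ.dependsOnlyOn_IPMsupp.image f)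
  · exact hμ.IPMsupp_subset (isClosed_IPMsupp.preimage f.continuous)
      (hfμ.dependsOnlyOn_IPMsupp.preimage hf
        (hfμ.IPMsupp_subset hf.isClosed_range (dependsOnlyOn_IPMmap_range μ f)))

end Compact

section Coupling

variable {X Y : Type*} [TopologicalSpace X] [TopologicalSpace Y] [CompactSpace X]
  [CompactSpace Y] [T2Space Y]

theorem dependsOnlyOn_range_prod_of_mem_AdmSet {i : C(X, Y)} {μ ν : C(X, ℝ) → ℝ}
    {ξ : C(Y × Y, ℝ) → ℝ} (hξ : ξ ∈ AdmSet (IPMmap i μ) (IPMmap i ν)) :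
    DependsOnlyOn ξ (range i ×ˢ range i) := by
  obtain ⟨hξ, h₁, h₂⟩ := hξ
  have hi : IsClosed (range i) := (isCompact_range i.continuous).isClosed
  have hfst : DependsOnlyOn ξ (univ ∩ Prod.fst ⁻¹' range i) :=
    hξ.dependsOnlyOn_inter_preimage isClosed_univ (dependsOnlyOn_univ ξ) ContinuousMap.fst hi
      (h₁ ▸ dependsOnlyOn_IPMmap_range μ i)
  rw [prod_eq, ← univ_inter (Prod.fst ⁻¹' _)]
  exact hξ.dependsOnlyOn_inter_preimage (isClosed_univ.inter (hi.preimage continuous_fst)) hfst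
    ContinuousMap.snd hi (h₂ ▸ dependsOnlyOn_IPMmap_range ν i)

theorem image_IPMmap_prodMap_AdmSet [T2Space X] {i : C(X, Y)} (hi : IsClosedEmbedding i)
    (μ ν : C(X, ℝ) → ℝ) :
    IPMmap (i.prodMap i) '' AdmSet μ ν = AdmSet (IPMmap i μ) (IPMmap i ν) := by
  refine Subset.antisymm ?_ fun ξ' hξ' => ?_
  · rintro _ ⟨ξ, ⟨hξ, rfl, rfl⟩, rfl⟩
    exact ⟨hξ.map _, rfl, rfl⟩
  · have hrange : DependsOnlyOn ξ' (range (i.prodMap i)) :=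
      (range_prodMap (m₁ := i) (m₂ := i)).symm ▸ dependsOnlyOn_range_prod_of_mem_AdmSet hξ'
    obtain ⟨ξ, hξ, rfl⟩ := hξ'.1.exists_IPMmap_eq (hi.prodMap hi) hrange
    exact ⟨ξ, ⟨hξ, IPMmap_injective hi hξ'.2.1, IPMmap_injective hi hξ'.2.2⟩, rfl⟩

end Coupling

theorem rhoI_isometric_embedding_general {X₁ X₂ : Type*} [MetricSpace X₁] [CompactSpace X₁]
    [MetricSpace X₂] [CompactSpace X₂] (i : X₁ → X₂) (hi : Isometry i)
    (μ ν : C(X₁, ℝ) → ℝ) :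
    rhoID (fun a b : X₂ => dist a b)
      (IPMmap ⟨i, hi.continuous⟩ μ) (IPMmap ⟨i, hi.continuous⟩ ν) =
    rhoID (fun a b : X₁ => dist a b) μ ν := by
  set I : C(X₁, X₂) := ⟨i, hi.continuous⟩
  have hI : IsClosedEmbedding I := hi.continuous.isClosedEmbedding hi.injective
  unfold rhoID
  rw [← image_IPMmap_prodMap_AdmSet hI, image_image]
  refine congrArg sInf (image_congr fun ξ hξ => ?_)
  rw [hξ.1.IPMsupp_IPMmap (hI.prodMap hI), image_image]
  simp [I, hi.dist_eq]

/-- `I` of an isometric embedding is an isometric embedding for the metrics `ρ_I`. -/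
theorem rhoI_isometric_embedding {X₁ X₂ : Type*} [MetricSpace X₁] [CompactSpace X₁]
    [MetricSpace X₂] [CompactSpace X₂] (i : X₁ → X₂) (hi : Isometry i)
    (μ ν : C(X₁, ℝ) → ℝ) (hμ : IsIPM X₁ μ) (hν : IsIPM X₁ ν) :
    rhoID (fun a b : X₂ => dist a b)
      (IPMmap ⟨i, hi.continuous⟩ μ) (IPMmap ⟨i, hi.continuous⟩ ν) =
    rhoID (fun a b : X₁ => dist a b) μ ν :=
  rhoI_isometric_embedding_general i hi μ ν
end

section
/- For any compact metric space (X, ρ), the diameter of (I(X), ρ_I) equals the diameter of (X, ρ). -/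
def diracF {X : Type*} [TopologicalSpace X] (x : X) : C(X, ℝ) → ℝ := fun φ => φ x

lemma dirac_ipm {X : Type*} [TopologicalSpace X] (x : X) : IsIPM X (diracF x) :=
  ⟨fun _ => rfl, fun _ _ => rfl, fun _ _ => rfl⟩

lemma mem_supp_of_dirac {X : Type*} [MetricSpace X] [CompactSpace X]
    (x y : X) (ξ : C(X × X, ℝ) → ℝ)
    (hξ : ξ ∈ AdmSet (diracF x) (diracF y)) : (x, y) ∈ IPMsupp ξ := by
  intro A hA
  obtain ⟨hAcl, ν, hν, hrep⟩ := hA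
  by_contra hxy
  have hAne : A.Nonempty := by
    by_contra h
    rw [Set.not_nonempty_iff_eq_empty] at h
    subst h
    have h01 : (ContinuousMap.const (∅ : Set (X × X)) (0:ℝ)) = ContinuousMap.const _ 1 := by
      ext a
      exact absurd a.2 (Set.notMem_empty _)
    have h0 := hν.1 0
    rw [h01, hν.1 1] at h0
    norm_num at h0
  set ψ : C(X × X, ℝ) := ⟨fun p => dist p.1 x + dist p.2 y, by continuity⟩ with hψ
  obtain ⟨p, hpA, hpmin'⟩ := hAcl.isCompact.exists_isMinOn hAne ψ.continuous.continuousOn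
  have hpmin : ∀ q ∈ A, ψ p ≤ ψ q := fun q hq => hpmin' hq
  have hppos : 0 < ψ p := by
    have hne : p ≠ (x, y) := fun h => hxy (h ▸ hpA)
    have hor : p.1 ≠ x ∨ p.2 ≠ y := by
      by_contra hc
      push_neg at hc
      exact hne (Prod.ext hc.1 hc.2)
    rcases hor with h | h
    · have : 0 < dist p.1 x := dist_pos.mpr h
      have : (0:ℝ) ≤ dist p.2 y := dist_nonneg
      simp only [hψ, ContinuousMap.coe_mk]
      linarith
    · have : 0 < dist p.2 y := dist_pos.mpr h
      have : (0:ℝ) ≤ dist p.1 x := dist_nonneg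
      simp only [hψ, ContinuousMap.coe_mk]
      linarith
  have hlow : ψ p ≤ ξ ψ := by
    rw [hrep ψ]
    have hle : (ContinuousMap.const A (ψ p)) ≤ ψ.restrict A :=
      ContinuousMap.le_def.mpr fun a => hpmin a a.2
    calc ψ p = ν (ContinuousMap.const A (ψ p)) := (hν.1 _).symm
      _ ≤ ν (ψ.restrict A) := ipm_mono hν hle
  set f : C(X, ℝ) := ⟨fun a => 2 * dist a x, by continuity⟩ with hf
  set g : C(X, ℝ) := ⟨fun b => 2 * dist b y, by continuity⟩ with hg
  have hle2 : ψ ≤ (f.comp ContinuousMap.fst) ⊔ (g.comp ContinuousMap.snd) := by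
    rw [ContinuousMap.le_def]
    intro q
    simp only [hψ, hf, hg, ContinuousMap.sup_apply, ContinuousMap.comp_apply,
      ContinuousMap.coe_mk, ContinuousMap.fst_apply, ContinuousMap.snd_apply]
    rcases le_total (dist q.1 x) (dist q.2 y) with h | h
    · exact le_max_of_le_right (by linarith)
    · exact le_max_of_le_left (by linarith)
  have h1 : ξ (f.comp ContinuousMap.fst) = 0 := by
    have := congrFun hξ.2.1 f
    simp only [IPMmap] at this
    rw [this]
    simp [diracF, hf]
  have h2 : ξ (g.comp ContinuousMap.snd) = 0 := by
    have := congrFun hξ.2.2 g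
    simp only [IPMmap] at this
    rw [this]
    simp [diracF, hg]
  have hup : ξ ψ ≤ 0 := by
    calc ξ ψ ≤ ξ ((f.comp ContinuousMap.fst) ⊔ (g.comp ContinuousMap.snd)) :=
        ipm_mono hξ.1 hle2
      _ = max (ξ (f.comp ContinuousMap.fst)) (ξ (g.comp ContinuousMap.snd)) := hξ.1.2.2 _ _
      _ = 0 := by rw [h1, h2]; simp
  linarith


/-- The diameter of `(I(X), ρ_I)` equals the diameter of `(X, ρ)`. -/
theorem rhoI_diam {X : Type*} [MetricSpace X] [CompactSpace X] [Nonempty X] :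
    sSup {r : ℝ | ∃ μ ν : C(X, ℝ) → ℝ, IsIPM X μ ∧ IsIPM X ν ∧
        r = rhoID (fun x y : X => dist x y) μ ν} =
      Metric.diam (Set.univ : Set X) := by
  set D := Metric.diam (Set.univ : Set X) with hD
  -- points achieving the diameter
  obtain ⟨p, -, hp'⟩ := isCompact_univ.exists_isMaxOn (Set.univ_nonempty)
    ((continuous_dist.comp (continuous_fst.prodMk continuous_snd)).continuousOn :
      ContinuousOn (fun q : X × X => dist q.1 q.2) Set.univ)
  have hp : ∀ q : X × X, dist q.1 q.2 ≤ dist p.1 p.2 := fun q => hp' (Set.mem_univ q)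
  clear hp'
  obtain ⟨x, y⟩ := p
  have hdxy : dist x y = D := by
    refine le_antisymm (Metric.dist_le_diam_of_mem isCompact_univ.isBounded trivial trivial) ?_
    exact Metric.diam_le_of_forall_dist_le dist_nonneg fun a _ b _ => hp (a, b)
  set T := {r : ℝ | ∃ μ ν : C(X, ℝ) → ℝ, IsIPM X μ ∧ IsIPM X ν ∧
      r = rhoID (fun x y : X => dist x y) μ ν} with hT
  -- every element of T is ≤ D
  have hub : ∀ r ∈ T, r ≤ D := by
    rintro r ⟨μ, ν, hμ, hν, rfl⟩
    rw [rhoID]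
    set S := ((fun ξ => sSup ((fun p : X × X => dist p.1 p.2) '' IPMsupp ξ)) ''
      AdmSet μ ν) with hS
    rcases S.eq_empty_or_nonempty with h | ⟨s, hs⟩
    · rw [h, Real.sInf_empty]
      exact Metric.diam_nonneg
    · have hsle : ∀ t ∈ S, t ≤ D := by
        rintro t ⟨ξ, -, rfl⟩
        refine Real.sSup_le ?_ Metric.diam_nonneg
        rintro u ⟨q, -, rfl⟩
        exact Metric.dist_le_diam_of_mem isCompact_univ.isBounded trivial trivial
      have hbdd : BddBelow S := ⟨0, by
        rintro t ⟨ξ, -, rfl⟩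
        exact Real.sSup_nonneg (by rintro u ⟨q, -, rfl⟩; exact dist_nonneg)⟩
      exact le_trans (csInf_le hbdd hs) (hsle s hs)
  -- D belongs to T
  have hmem : D ∈ T := by
    refine ⟨diracF x, diracF y, dirac_ipm x, dirac_ipm y, ?_⟩
    rw [rhoID]
    set S := ((fun ξ => sSup ((fun p : X × X => dist p.1 p.2) '' IPMsupp ξ)) ''
      AdmSet (diracF x) (diracF y)) with hS
    have hξ0 : diracF (X := X × X) (x, y) ∈ AdmSet (diracF x) (diracF y) :=
      ⟨dirac_ipm _, rfl, rfl⟩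
    have hSel : ∀ t ∈ S, t = D := by
      rintro t ⟨ξ, hξ, rfl⟩
      refine le_antisymm ?_ ?_
      · refine Real.sSup_le ?_ Metric.diam_nonneg
        rintro u ⟨q, -, rfl⟩
        exact Metric.dist_le_diam_of_mem isCompact_univ.isBounded trivial trivial
      · refine le_csSup ⟨D, ?_⟩ ⟨(x, y), mem_supp_of_dirac x y ξ hξ, hdxy⟩
        rintro u ⟨q, -, rfl⟩
        exact Metric.dist_le_diam_of_mem isCompact_univ.isBounded trivial trivial
    have hSne : S.Nonempty := ⟨_, Set.mem_image_of_mem _ hξ0⟩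
    obtain ⟨s0, hs0⟩ := hSne
    refine le_antisymm ?_ ?_
    · exact le_csInf ⟨s0, hs0⟩ fun b hb => (hSel b hb).ge
    · exact le_trans (csInf_le ⟨D, fun b hb => (hSel b hb).ge⟩ hs0) (hSel s0 hs0).le
  exact le_antisymm (csSup_le ⟨D, hmem⟩ hub) (le_csSup ⟨D, hub⟩ hmem)
end

section
/- For a compact Hausdorff space X, the barycenter map ψ_X : I²(X) → I(X) defined by ψ_X(M)(φ) = M(φ̄), where φ̄(μ) = μ(φ), is well defined (ψ_X(M) is an idempotent probability measure) and satisfies ψ_X ∘ δ_{I(X)} = id_{I(X)}, i.e., ψ_X(δ_μ) = μ for all μ ∈ I(X). -/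
/-- The space `I(X)` of idempotent probability measures, with the pointwise-convergence
(subspace of product) topology. -/
abbrev IPMspace (X : Type*) [TopologicalSpace X] := {μ : C(X, ℝ) → ℝ // IsIPM X μ}

/-- For `φ ∈ C(X, ℝ)`, the function `φ̄ : I(X) → ℝ`, `φ̄(μ) = μ(φ)`, is continuous. -/
def barFn {X : Type*} [TopologicalSpace X] (φ : C(X, ℝ)) : C(IPMspace X, ℝ) :=
  ⟨fun μ => μ.1 φ, (continuous_apply φ).comp continuous_subtype_val⟩

/-- The barycenter map `ψ_X : I²(X) → I(X)`, `ψ_X(M)(φ) = M(φ̄)`. -/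
def bary {X : Type*} [TopologicalSpace X] (M : C(IPMspace X, ℝ) → ℝ) : C(X, ℝ) → ℝ :=
  fun φ => M (barFn φ)

lemma barFn_const {X : Type*} [TopologicalSpace X] (c : ℝ) :
    barFn (ContinuousMap.const X c) = ContinuousMap.const (IPMspace X) c := by
  ext μ; exact μ.2.1 c

lemma barFn_add_const {X : Type*} [TopologicalSpace X] (φ : C(X, ℝ)) (c : ℝ) :
    barFn (φ + ContinuousMap.const X c) = barFn φ + ContinuousMap.const (IPMspace X) c := by
  ext μ; exact μ.2.2.1 φ c

lemma barFn_sup {X : Type*} [TopologicalSpace X] (φ ψ : C(X, ℝ)) :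
    barFn (φ ⊔ ψ) = barFn φ ⊔ barFn ψ := by
  ext μ; exact μ.2.2.2 φ ψ

/-- The barycenter `ψ_X(M)(φ) = M(φ̄)` of an idempotent probability measure `M` on `I(X)`
is an idempotent probability measure on `X`, and `ψ_X ∘ δ_{I(X)} = id`: `ψ_X(δ_μ) = μ`. -/
theorem bary_isIPM_and_section {X : Type*} [TopologicalSpace X] [CompactSpace X] [T2Space X] :
    (∀ M : C(IPMspace X, ℝ) → ℝ, IsIPM (IPMspace X) M → IsIPM X (bary M)) ∧
    (∀ μ : IPMspace X, bary (fun Φ : C(IPMspace X, ℝ) => Φ μ) = μ.1) := by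
  constructor
  · intro M hM
    refine ⟨fun c => ?_, fun φ c => ?_, fun φ ψ => ?_⟩
    · rw [bary, barFn_const]; exact hM.1 c
    · rw [bary, barFn_add_const]; exact hM.2.1 _ c
    · rw [bary, barFn_sup]; exact hM.2.2 _ _
  · intro μ; rfl
end

section
/- Let (X, ρ) be a compact metric space, x_0 ∈ X, and μ ∈ I(X). Then for every N ∈ I²(X) with ψ(N) = μ one has ρ_2(δ_{δ_{x_0}}, N) = ρ_1(μ, δ_{x_0}); moreover ρ_1(μ, δ_{x_0}) = sup{ ρ(x, x_0) : x ∈ supp μ }. -/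
open Set

namespace IPMaux

variable {Z : Type*} [TopologicalSpace Z] {μ : C(Z, ℝ) → ℝ}

theorem nonempty_of (hμ : IsIPM Z μ) : Nonempty Z := by
  by_contra h
  have h0 : (ContinuousMap.const Z (0 : ℝ)) = ContinuousMap.const Z 1 := by
    ext z; exact absurd ⟨z⟩ h
  have h1 := hμ.1 0
  rw [h0, hμ.1 1] at h1
  norm_num at h1

theorem mono (hμ : IsIPM Z μ) {φ ψ : C(Z, ℝ)} (h : φ ≤ ψ) : μ φ ≤ μ ψ := by
  have h1 : φ ⊔ ψ = ψ := sup_eq_right.2 h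
  have h2 := hμ.2.2 φ ψ
  rw [h1] at h2
  exact (le_max_left (μ φ) (μ ψ)).trans h2.ge

/-- subtracting a constant -/
theorem sub_const (hμ : IsIPM Z μ) (φ : C(Z, ℝ)) (c : ℝ) :
    μ (φ + ContinuousMap.const Z (-c)) = μ φ - c := by
  rw [hμ.2.1]; ring

def Spt (μ : C(Z, ℝ) → ℝ) : Set Z := {z | ∃ c : ℝ, ∀ ψ : C(Z, ℝ), ψ z = 0 → c ≤ μ ψ}

theorem spt_le (hμ : IsIPM Z μ) {z : Z} {c : ℝ}
    (hc : ∀ ψ : C(Z, ℝ), ψ z = 0 → c ≤ μ ψ) (φ : C(Z, ℝ)) : φ z + c ≤ μ φ := by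
  have h := hc (φ + ContinuousMap.const Z (-(φ z))) (by simp)
  rw [sub_const hμ] at h
  linarith

theorem spt_c_nonpos (hμ : IsIPM Z μ) {z : Z} {c : ℝ}
    (hc : ∀ ψ : C(Z, ℝ), ψ z = 0 → c ≤ μ ψ) : c ≤ 0 := by
  have h := hc (ContinuousMap.const Z 0) rfl
  rwa [hμ.1 0] at h

section Compact
variable [CompactSpace Z]

theorem key (hμ : IsIPM Z μ) (φ : C(Z, ℝ)) (s : ℝ)
    (h : ∀ z : Z, ∃ ψ : C(Z, ℝ), ψ z = 0 ∧ μ ψ + φ z ≤ s) : μ φ ≤ s := by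
  have H : ∀ ε : ℝ, 0 < ε → μ φ ≤ s + 2 * ε := by
    intro ε hε
    choose ψ hψ0 hψs using h
    set U : Z → Set Z := fun z => {y | -ε < ψ z y ∧ φ y < φ z + ε} with hU
    have hUopen : ∀ z, IsOpen (U z) := by
      intro z
      exact (isOpen_lt continuous_const (ψ z).continuous).inter
        (isOpen_lt φ.continuous continuous_const)
    have hUmem : ∀ z, z ∈ U z := fun z => ⟨by simp [hψ0 z, hε], by linarith⟩
    obtain ⟨t, ht⟩ := isCompact_univ.elim_finite_subcover U hUopen
      (fun z _ => mem_iUnion.2 ⟨z, hUmem z⟩)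
    have hZ : Nonempty Z := nonempty_of hμ
    obtain ⟨z⟩ := hZ
    have htne : t.Nonempty := by
      obtain ⟨i, hit, _⟩ := mem_iUnion₂.1 (ht (mem_univ z))
      exact ⟨i, hit⟩
    set g : Z → C(Z, ℝ) := fun z => ψ z + ContinuousMap.const Z (φ z + 2 * ε) with hg
    have hφle : φ ≤ t.sup' htne g := by
      rw [ContinuousMap.le_def]
      intro y
      obtain ⟨i, hit, hyU⟩ := mem_iUnion₂.1 (ht (mem_univ y))
      have h1 : φ y ≤ g i y := by
        have := hyU.1; have := hyU.2
        simp only [hg, ContinuousMap.add_apply, ContinuousMap.const_apply]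
        linarith
      calc φ y ≤ g i y := h1
        _ ≤ (t.sup' htne g) y := by
            rw [ContinuousMap.sup'_apply]
            exact Finset.le_sup' (fun j => g j y) hit
    have hsup : μ (t.sup' htne g) = t.sup' htne fun z => μ (g z) :=
      map_finset_sup' (⟨μ, fun a b => hμ.2.2 a b⟩ : SupHom C(Z, ℝ) ℝ) htne g
    have h2 : μ φ ≤ t.sup' htne fun z => μ (g z) := hsup ▸ mono hμ hφle
    refine h2.trans (Finset.sup'_le _ _ fun i _ => ?_)
    rw [hg]
    simp only
    rw [hμ.2.1]
    have := hψs i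
    linarith
  refine le_of_forall_pos_le_add fun ε hε => ?_
  have := H (ε / 2) (by linarith)
  linarith

theorem eqOn_closure (hμ : IsIPM Z μ) {φ φ' : C(Z, ℝ)}
    (h : Set.EqOn φ φ' (closure (Spt μ))) : μ φ = μ φ' := by
  have half : ∀ φ φ' : C(Z, ℝ), Set.EqOn φ φ' (closure (Spt μ)) → μ φ ≤ μ φ' := by
    intro φ φ' h
    apply key hμ φ (μ φ')
    intro z
    by_cases hz : z ∈ closure (Spt μ)
    · refine ⟨φ' + ContinuousMap.const Z (-(φ' z)), by simp, ?_⟩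
      rw [sub_const hμ]
      have hzz : φ z = φ' z := h hz
      linarith
    · have hz' : z ∉ Spt μ := fun hzz => hz (subset_closure hzz)
      simp only [Spt, mem_setOf_eq, not_exists] at hz'
      have := hz' (μ φ' - φ z)
      push_neg at this
      obtain ⟨ψ, hψ0, hψlt⟩ := this
      exact ⟨ψ, hψ0, by linarith⟩
  exact le_antisymm (half _ _ h) (half _ _ fun x hx => (h hx).symm)

theorem spt_nonempty (hμ : IsIPM Z μ) : (Spt μ).Nonempty := by
  by_contra h
  have h' : ∀ z : Z, ∃ ψ : C(Z, ℝ), ψ z = 0 ∧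
      μ ψ + (ContinuousMap.const Z (0 : ℝ)) z ≤ -1 := by
    intro z
    have hz : z ∉ Spt μ := fun hz => h ⟨z, hz⟩
    simp only [Spt, mem_setOf_eq, not_exists] at hz
    have := hz (-1 : ℝ)
    push_neg at this
    obtain ⟨ψ, hψ0, hψlt⟩ := this
    exact ⟨ψ, hψ0, by simpa using hψlt.le⟩
  have h2 := key hμ _ _ h'
  rw [hμ.1 0] at h2
  linarith

end Compact
end IPMaux


namespace IPMaux
variable {Z : Type*} [TopologicalSpace Z] {μ : C(Z, ℝ) → ℝ}

theorem supp_isClosed (μ : C(Z, ℝ) → ℝ) : IsClosed (IPMsupp μ) :=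
  isClosed_sInter fun _ hA => hA.1

variable [CompactSpace Z] [T2Space Z]

theorem restrict_eqOn {A : Set Z} {g g' : C(Z, ℝ)} (h : g.restrict A = g'.restrict A) :
    Set.EqOn g g' A := by
  intro a ha
  have := congrFun (congrArg (fun f : C(A, ℝ) => (f : A → ℝ)) h) ⟨a, ha⟩
  simpa using this

theorem supp_eq (hμ : IsIPM Z μ) : IPMsupp μ = closure (Spt μ) := by
  apply subset_antisymm
  · apply sInter_subset_of_mem
    refine ⟨isClosed_closure, ?_⟩
    set A := closure (Spt μ) with hA
    have hAc : IsClosed A := isClosed_closure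
    have hext : ∀ Ψ : C(A, ℝ), ∃ g : C(Z, ℝ), g.restrict A = Ψ :=
      fun Ψ => ContinuousMap.exists_restrict_eq hAc Ψ
    choose E hE using hext
    have hkey : ∀ (g : C(Z, ℝ)), μ (E (g.restrict A)) = μ g := by
      intro g
      exact eqOn_closure hμ (restrict_eqOn ((hE (g.restrict A))))
    refine ⟨fun Ψ => μ (E Ψ), ⟨fun c => ?_, fun Ψ c => ?_, fun Ψ Ψ' => ?_⟩, fun φ => (hkey φ).symm⟩
    · have h1 : (ContinuousMap.const Z c).restrict A = ContinuousMap.const A c := by ext; rfl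
      have := hkey (ContinuousMap.const Z c)
      rw [h1] at this
      show μ (E (ContinuousMap.const (↑A) c)) = c
      rw [this, hμ.1]
    · have h1 : (E Ψ + ContinuousMap.const Z c).restrict A = Ψ + ContinuousMap.const A c := by
        ext a
        have := congrFun (congrArg (fun f : C(A, ℝ) => (f : A → ℝ)) (hE Ψ)) a
        simp only [ContinuousMap.restrict_apply, ContinuousMap.add_apply,
          ContinuousMap.const_apply] at this ⊢
        rw [← this]
      calc μ (E (Ψ + ContinuousMap.const A c)) = μ (E ((E Ψ + ContinuousMap.const Z c).restrict A)) := by rw [h1]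
        _ = μ (E Ψ + ContinuousMap.const Z c) := hkey _
        _ = μ (E Ψ) + c := hμ.2.1 _ _
    · have h1 : (E Ψ ⊔ E Ψ').restrict A = Ψ ⊔ Ψ' := by
        ext a
        have t1 := congrFun (congrArg (fun f : C(A, ℝ) => (f : A → ℝ)) (hE Ψ)) a
        have t2 := congrFun (congrArg (fun f : C(A, ℝ) => (f : A → ℝ)) (hE Ψ')) a
        simp only [ContinuousMap.restrict_apply, ContinuousMap.sup_apply] at t1 t2 ⊢
        rw [← t1, ← t2]
      calc μ (E (Ψ ⊔ Ψ')) = μ (E ((E Ψ ⊔ E Ψ').restrict A)) := by rw [h1]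
        _ = μ (E Ψ ⊔ E Ψ') := hkey _
        _ = max (μ (E Ψ)) (μ (E Ψ')) := hμ.2.2 _ _
  · refine closure_minimal ?_ (supp_isClosed μ)
    intro z hz
    rw [IPMsupp, mem_sInter]
    rintro A ⟨hAc, ν, hν, hrep⟩
    by_contra hzA
    obtain ⟨c, hc⟩ := hz
    obtain ⟨g, hg0, hg1, -⟩ := exists_continuous_zero_one_of_isClosed hAc isClosed_singleton
      (disjoint_singleton_right.2 hzA)
    obtain ⟨n, hn⟩ := exists_nat_gt (-c)
    set ψn : C(Z, ℝ) := (n : ℝ) • g + ContinuousMap.const Z (-(n : ℝ)) with hψn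
    have h0 : ψn z = 0 := by
      simp [hψn, hg1 (mem_singleton z)]
    have hres : ((n : ℝ) • g).restrict A = (ContinuousMap.const Z (0 : ℝ)).restrict A := by
      ext a
      simp [hg0 a.2]
    have hval : μ ψn = -(n : ℝ) := by
      rw [hψn, hμ.2.1]
      have : μ ((n : ℝ) • g) = 0 := by
        rw [hrep, hres, ← hrep, hμ.1]
      rw [this]; ring
    have := hc ψn h0
    rw [hval] at this
    linarith

theorem supp_nonempty (hμ : IsIPM Z μ) : (IPMsupp μ).Nonempty := by
  rw [supp_eq hμ]
  exact (spt_nonempty hμ).closure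

theorem le_sSup_supp (hμ : IsIPM Z μ) (φ : C(Z, ℝ)) :
    μ φ ≤ sSup (φ '' IPMsupp μ) := by
  set m := sSup (φ '' IPMsupp μ) with hm
  have hbdd : BddAbove (φ '' IPMsupp μ) :=
    ((supp_isClosed μ).isCompact.image φ.continuous).bddAbove
  have hle : ∀ p ∈ IPMsupp μ, φ p ≤ m := fun p hp => le_csSup hbdd ⟨p, hp, rfl⟩
  have h1 : μ φ ≤ μ (φ ⊔ ContinuousMap.const Z m) := mono hμ le_sup_left
  have h2 : μ (φ ⊔ ContinuousMap.const Z m) = μ (ContinuousMap.const Z m) := by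
    apply eqOn_closure hμ
    rw [← supp_eq hμ]
    intro p hp
    simp [max_eq_right (hle p hp)]
  rw [h2, hμ.1] at h1
  exact h1

end IPMaux

namespace IPMaux
variable {Z W : Type*} [TopologicalSpace Z] [TopologicalSpace W] {μ : C(Z, ℝ) → ℝ}

theorem isIPM_map (hμ : IsIPM Z μ) (f : C(Z, W)) : IsIPM W (IPMmap f μ) := by
  refine ⟨fun c => ?_, fun φ c => ?_, fun φ ψ => ?_⟩
  · have h1 : (ContinuousMap.const W c).comp f = ContinuousMap.const Z c := by ext; rfl
    show μ ((ContinuousMap.const W c).comp f) = c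
    rw [h1, hμ.1]
  · have h1 : (φ + ContinuousMap.const W c).comp f = φ.comp f + ContinuousMap.const Z c := by
      ext; rfl
    show μ ((φ + ContinuousMap.const W c).comp f) = μ (φ.comp f) + c
    rw [h1, hμ.2.1]
  · have h1 : (φ ⊔ ψ).comp f = φ.comp f ⊔ ψ.comp f := by ext; rfl
    show μ ((φ ⊔ ψ).comp f) = max (μ (φ.comp f)) (μ (ψ.comp f))
    rw [h1, hμ.2.2]

theorem isIPM_dirac (z₀ : Z) : IsIPM Z (fun φ : C(Z, ℝ) => φ z₀) :=
  ⟨fun _ => rfl, fun _ _ => rfl, fun _ _ => rfl⟩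

variable [CompactSpace Z] [T2Space Z] [CompactSpace W] [T2Space W]

theorem supp_map (hμ : IsIPM Z μ) (f : C(Z, W)) :
    IPMsupp (IPMmap f μ) = f '' IPMsupp μ := by
  have hν := isIPM_map hμ f
  apply subset_antisymm
  · have hKc : IsClosed (f '' IPMsupp μ) :=
      (((supp_isClosed μ).isCompact.image f.continuous)).isClosed
    rw [supp_eq hν]
    apply closure_minimal _ hKc
    intro w hw
    by_contra hwK
    obtain ⟨c, hc⟩ := hw
    obtain ⟨g, hg0, hg1, -⟩ := exists_continuous_zero_one_of_isClosed hKc isClosed_singleton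
      (disjoint_singleton_right.2 hwK)
    obtain ⟨n, hn⟩ := exists_nat_gt (-c)
    set ψn : C(W, ℝ) := (n : ℝ) • g + ContinuousMap.const W (-(n : ℝ)) with hψn
    have h0 : ψn w = 0 := by simp [hψn, hg1 (mem_singleton w)]
    have hcomp : ψn.comp f = ((n : ℝ) • g).comp f + ContinuousMap.const Z (-(n : ℝ)) := by
      ext; rfl
    have hzero : μ (((n : ℝ) • g).comp f) = 0 := by
      have heq : Set.EqOn (((n : ℝ) • g).comp f) (ContinuousMap.const Z (0 : ℝ))
          (closure (Spt μ)) := by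
        rw [← supp_eq hμ]
        intro z hz
        have : g (f z) = 0 := hg0 ⟨z, hz, rfl⟩
        simp [this]
      rw [eqOn_closure hμ heq, hμ.1]
    have hval : IPMmap f μ ψn = -(n : ℝ) := by
      show μ (ψn.comp f) = _
      rw [hcomp, hμ.2.1, hzero]; ring
    have := hc ψn h0
    rw [hval] at this
    linarith
  · rw [supp_eq hμ, supp_eq hν]
    have h1 : f '' Spt μ ⊆ Spt (IPMmap f μ) := by
      rintro w ⟨z, hz, rfl⟩
      obtain ⟨c, hc⟩ := hz
      exact ⟨c, fun Ψ hΨ => hc (Ψ.comp f) (by simpa using hΨ)⟩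
    calc f '' closure (Spt μ) ⊆ closure (f '' Spt μ) :=
          image_closure_subset_closure_image f.continuous
      _ ⊆ closure (Spt (IPMmap f μ)) := closure_mono h1

theorem supp_dirac (z₀ : Z) : IPMsupp (fun φ : C(Z, ℝ) => φ z₀) = {z₀} := by
  apply subset_antisymm
  · apply sInter_subset_of_mem
    refine ⟨isClosed_singleton, fun Ψ => Ψ ⟨z₀, rfl⟩, ⟨fun _ => rfl, fun _ _ => rfl, fun _ _ => rfl⟩, fun φ => rfl⟩
  · rw [singleton_subset_iff, IPMsupp, mem_sInter]
    rintro A ⟨hAc, ν, hν, hrep⟩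
    by_contra hzA
    obtain ⟨g, hg0, hg1, -⟩ := exists_continuous_zero_one_of_isClosed hAc isClosed_singleton
      (disjoint_singleton_right.2 hzA)
    have hres : g.restrict A = (ContinuousMap.const Z (0 : ℝ)).restrict A := by
      ext a; simp [hg0 a.2]
    have h1 : g z₀ = 0 := by
      have h2 := hrep g
      rw [hres, ← hrep] at h2
      simpa using h2
    rw [hg1 (mem_singleton z₀)] at h1
    norm_num at h1

end IPMaux

namespace IPMaux
variable {Z : Type*} [TopologicalSpace Z] [CompactSpace Z] [T2Space Z]

theorem rho_dirac_left (d : Z → Z → ℝ) (z₀ : Z) {μ₂ : C(Z, ℝ) → ℝ} (hμ₂ : IsIPM Z μ₂) :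
    rhoID d (fun φ : C(Z, ℝ) => φ z₀) μ₂ = sSup ((fun w => d z₀ w) '' IPMsupp μ₂) := by
  set δ : C(Z, ℝ) → ℝ := fun φ => φ z₀ with hδ
  set j : C(Z, Z × Z) := (ContinuousMap.const Z z₀).prodMk (ContinuousMap.id Z) with hj
  set ξ₀ : C(Z × Z, ℝ) → ℝ := IPMmap j μ₂ with hξ₀
  have hmem : ξ₀ ∈ AdmSet δ μ₂ := by
    refine ⟨isIPM_map hμ₂ j, ?_, ?_⟩
    · funext φ
      have h1 : (φ.comp ContinuousMap.fst).comp j = ContinuousMap.const Z (φ z₀) := by ext; rfl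
      show μ₂ ((φ.comp ContinuousMap.fst).comp j) = φ z₀
      rw [h1, hμ₂.1]
    · funext φ
      have h1 : (φ.comp ContinuousMap.snd).comp j = φ := by ext; rfl
      show μ₂ ((φ.comp ContinuousMap.snd).comp j) = μ₂ φ
      rw [h1]
  have himg : ∀ ξ ∈ AdmSet δ μ₂,
      (fun p : Z × Z => d p.1 p.2) '' IPMsupp ξ = (fun w => d z₀ w) '' IPMsupp μ₂ := by
    rintro ξ ⟨hξ, hf, hs⟩
    have hfst : Prod.fst '' IPMsupp ξ = ({z₀} : Set Z) := by
      have := supp_map hξ ((ContinuousMap.fst : C(Z × Z, Z)))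
      rw [hf, supp_dirac] at this
      exact this.symm
    have hsnd : Prod.snd '' IPMsupp ξ = IPMsupp μ₂ := by
      have := supp_map hξ ((ContinuousMap.snd : C(Z × Z, Z)))
      rw [hs] at this
      exact this.symm
    apply subset_antisymm
    · rintro - ⟨p, hp, rfl⟩
      have h1 : p.1 = z₀ := by
        have : p.1 ∈ ({z₀} : Set Z) := hfst ▸ ⟨p, hp, rfl⟩
        simpa using this
      refine ⟨p.2, hsnd ▸ ⟨p, hp, rfl⟩, ?_⟩
      show d z₀ p.2 = d p.1 p.2
      rw [h1]
    · rintro - ⟨w, hw, rfl⟩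
      rw [← hsnd] at hw
      obtain ⟨p, hp, h2⟩ := hw
      have h1 : p.1 = z₀ := by
        have : p.1 ∈ ({z₀} : Set Z) := hfst ▸ ⟨p, hp, rfl⟩
        simpa using this
      refine ⟨p, hp, ?_⟩
      show d p.1 p.2 = d z₀ w
      rw [h1, h2]
  have hout : (fun ξ => sSup ((fun p : Z × Z => d p.1 p.2) '' IPMsupp ξ)) '' AdmSet δ μ₂ =
      {sSup ((fun w => d z₀ w) '' IPMsupp μ₂)} := by
    apply subset_antisymm
    · rintro - ⟨ξ, hξ, rfl⟩
      simp only [mem_singleton_iff]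
      exact congrArg sSup (himg ξ hξ)
    · rintro - rfl
      exact ⟨ξ₀, hmem, congrArg sSup (himg ξ₀ hmem)⟩
  rw [rhoID, hout, csInf_singleton]

theorem rho_dirac_right (d : Z → Z → ℝ) (z₀ : Z) {μ₁ : C(Z, ℝ) → ℝ} (hμ₁ : IsIPM Z μ₁) :
    rhoID d μ₁ (fun φ : C(Z, ℝ) => φ z₀) = sSup ((fun w => d w z₀) '' IPMsupp μ₁) := by
  set δ : C(Z, ℝ) → ℝ := fun φ => φ z₀ with hδ
  set j : C(Z, Z × Z) := (ContinuousMap.id Z).prodMk (ContinuousMap.const Z z₀) with hj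
  set ξ₀ : C(Z × Z, ℝ) → ℝ := IPMmap j μ₁ with hξ₀
  have hmem : ξ₀ ∈ AdmSet μ₁ δ := by
    refine ⟨isIPM_map hμ₁ j, ?_, ?_⟩
    · funext φ
      have h1 : (φ.comp ContinuousMap.fst).comp j = φ := by ext; rfl
      show μ₁ ((φ.comp ContinuousMap.fst).comp j) = μ₁ φ
      rw [h1]
    · funext φ
      have h1 : (φ.comp ContinuousMap.snd).comp j = ContinuousMap.const Z (φ z₀) := by ext; rfl
      show μ₁ ((φ.comp ContinuousMap.snd).comp j) = φ z₀
      rw [h1, hμ₁.1]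
  have himg : ∀ ξ ∈ AdmSet μ₁ δ,
      (fun p : Z × Z => d p.1 p.2) '' IPMsupp ξ = (fun w => d w z₀) '' IPMsupp μ₁ := by
    rintro ξ ⟨hξ, hf, hs⟩
    have hfst : Prod.fst '' IPMsupp ξ = IPMsupp μ₁ := by
      have := supp_map hξ ((ContinuousMap.fst : C(Z × Z, Z)))
      rw [hf] at this
      exact this.symm
    have hsnd : Prod.snd '' IPMsupp ξ = ({z₀} : Set Z) := by
      have := supp_map hξ ((ContinuousMap.snd : C(Z × Z, Z)))
      rw [hs, supp_dirac] at this
      exact this.symm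
    apply subset_antisymm
    · rintro - ⟨p, hp, rfl⟩
      have h1 : p.2 = z₀ := by
        have : p.2 ∈ ({z₀} : Set Z) := hsnd ▸ ⟨p, hp, rfl⟩
        simpa using this
      refine ⟨p.1, hfst ▸ ⟨p, hp, rfl⟩, ?_⟩
      show d p.1 z₀ = d p.1 p.2
      rw [h1]
    · rintro - ⟨w, hw, rfl⟩
      rw [← hfst] at hw
      obtain ⟨p, hp, h2⟩ := hw
      have h1 : p.2 = z₀ := by
        have : p.2 ∈ ({z₀} : Set Z) := hsnd ▸ ⟨p, hp, rfl⟩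
        simpa using this
      refine ⟨p, hp, ?_⟩
      show d p.1 p.2 = d w z₀
      rw [h1, h2]
  have hout : (fun ξ => sSup ((fun p : Z × Z => d p.1 p.2) '' IPMsupp ξ)) '' AdmSet μ₁ δ =
      {sSup ((fun w => d w z₀) '' IPMsupp μ₁)} := by
    apply subset_antisymm
    · rintro - ⟨ξ, hξ, rfl⟩
      simp only [mem_singleton_iff]
      exact congrArg sSup (himg ξ hξ)
    · rintro - rfl
      exact ⟨ξ₀, hmem, congrArg sSup (himg ξ₀ hmem)⟩
  rw [rhoID, hout, csInf_singleton]

end IPMaux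

namespace IPMaux
variable {X : Type*} [TopologicalSpace X] [CompactSpace X]

theorem isIPM_isClosed : IsClosed {μ : C(X, ℝ) → ℝ | IsIPM X μ} := by
  have hset : {μ : C(X, ℝ) → ℝ | IsIPM X μ} =
      (⋂ c : ℝ, {μ : C(X, ℝ) → ℝ | μ (ContinuousMap.const X c) = c}) ∩
      ((⋂ φ : C(X, ℝ), ⋂ c : ℝ,
          {μ : C(X, ℝ) → ℝ | μ (φ + ContinuousMap.const X c) = μ φ + c}) ∩
       (⋂ φ : C(X, ℝ), ⋂ ψ : C(X, ℝ),
          {μ : C(X, ℝ) → ℝ | μ (φ ⊔ ψ) = max (μ φ) (μ ψ)})) := by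
    ext μ
    simp only [IsIPM, mem_setOf_eq, mem_inter_iff, mem_iInter]
  rw [hset]
  refine IsClosed.inter ?_ (IsClosed.inter ?_ ?_)
  · exact isClosed_iInter fun c => isClosed_eq (continuous_apply _) continuous_const
  · exact isClosed_iInter fun φ => isClosed_iInter fun c =>
      isClosed_eq (continuous_apply _) ((continuous_apply φ).add continuous_const)
  · exact isClosed_iInter fun φ => isClosed_iInter fun ψ =>
      isClosed_eq (continuous_apply _) ((continuous_apply φ).max (continuous_apply ψ))

theorem compactSpace_ipm : CompactSpace (IPMspace X) := by
  have hK : IsCompact {μ : C(X, ℝ) → ℝ | ∀ φ : C(X, ℝ), μ φ ∈ Icc (-‖φ‖) ‖φ‖} :=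
    isCompact_pi_infinite fun φ => isCompact_Icc
  have hsub : {μ : C(X, ℝ) → ℝ | IsIPM X μ} ⊆
      {μ : C(X, ℝ) → ℝ | ∀ φ : C(X, ℝ), μ φ ∈ Icc (-‖φ‖) ‖φ‖} := by
    intro μ hμ φ
    have hub : φ ≤ ContinuousMap.const X ‖φ‖ := by
      rw [ContinuousMap.le_def]
      intro x
      exact (abs_le.1 (φ.norm_coe_le_norm x)).2
    have hlb : ContinuousMap.const X (-‖φ‖) ≤ φ := by
      rw [ContinuousMap.le_def]
      intro x
      exact (abs_le.1 (φ.norm_coe_le_norm x)).1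
    constructor
    · have := mono hμ hlb
      rwa [hμ.1] at this
    · have := mono hμ hub
      rwa [hμ.1] at this
  exact isCompact_iff_compactSpace.mp (hK.of_isClosed_subset isIPM_isClosed hsub)

end IPMaux


open IPMaux

/-- For `N ∈ I²(X)` with barycenter `μ` one has `ρ₂(δ_{δ_{x₀}}, N) = ρ₁(μ, δ_{x₀})`, and
moreover `ρ₁(μ, δ_{x₀}) = sup { ρ(x, x₀) : x ∈ supp μ }`. -/
theorem bary_dist_dirac {X : Type*} [MetricSpace X] [CompactSpace X] (x₀ : X)
    (μ : C(X, ℝ) → ℝ) (hμ : IsIPM X μ)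
    (N : C(IPMspace X, ℝ) → ℝ) (hN : IsIPM (IPMspace X) N) (hbar : bary N = μ) :
    ∃ hd : IsIPM X (fun φ : C(X, ℝ) => φ x₀),
      rhoID (fun μ' ν' : IPMspace X => rhoID (fun x y : X => dist x y) μ'.1 ν'.1)
          (fun Φ : C(IPMspace X, ℝ) => Φ ⟨fun φ : C(X, ℝ) => φ x₀, hd⟩) N =
        rhoID (fun x y : X => dist x y) μ (fun φ : C(X, ℝ) => φ x₀) ∧
      rhoID (fun x y : X => dist x y) μ (fun φ : C(X, ℝ) => φ x₀) =
        sSup ((fun x : X => dist x x₀) '' IPMsupp μ) := by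
  haveI : CompactSpace (IPMspace X) := compactSpace_ipm
  have hd : IsIPM X (fun φ : C(X, ℝ) => φ x₀) := isIPM_dirac x₀
  have hcontf : Continuous fun x : X => dist x x₀ := Continuous.dist continuous_id continuous_const
  have part3 : rhoID (fun x y : X => dist x y) μ (fun φ : C(X, ℝ) => φ x₀) =
      sSup ((fun x : X => dist x x₀) '' IPMsupp μ) := by
    have h3 := rho_dirac_right (fun x y : X => dist x y) x₀ hμ
    exact h3
  refine ⟨hd, ?_, part3⟩
  set p₀ : IPMspace X := ⟨fun φ : C(X, ℝ) => φ x₀, hd⟩ with hp₀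
  set d' : IPMspace X → IPMspace X → ℝ :=
    fun μ' ν' : IPMspace X => rhoID (fun x y : X => dist x y) μ'.1 ν'.1 with hd'
  set R : ℝ := sSup ((fun x : X => dist x x₀) '' IPMsupp μ) with hRdef
  set G : IPMspace X → ℝ :=
    fun ν : IPMspace X => sSup ((fun x : X => dist x x₀) '' IPMsupp ν.1) with hGdef
  have h2 : rhoID d' (fun Φ : C(IPMspace X, ℝ) => Φ p₀) N =
      sSup ((fun ν : IPMspace X => d' p₀ ν) '' IPMsupp N) := rho_dirac_left d' p₀ hN
  have hGfun : (fun ν : IPMspace X => d' p₀ ν) = G := by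
    funext ν
    have h3 := rho_dirac_left (fun x y : X => dist x y) x₀ ν.2
    have hfe : (fun w : X => dist x₀ w) = fun x : X => dist x x₀ :=
      funext fun w => dist_comm x₀ w
    calc d' p₀ ν = rhoID (fun x y : X => dist x y) (fun φ : C(X, ℝ) => φ x₀) ν.1 := rfl
      _ = sSup ((fun w : X => dist x₀ w) '' IPMsupp ν.1) := h3
      _ = G ν := by rw [hfe]
  -- bounds
  have hbddR : BddAbove ((fun x : X => dist x x₀) '' IPMsupp μ) :=
    ((supp_isClosed μ).isCompact.image hcontf).bddAbove
  have hR0 : 0 ≤ R := by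
    obtain ⟨x, hx⟩ := supp_nonempty hμ
    exact le_trans dist_nonneg (le_csSup hbddR ⟨x, hx, rfl⟩)
  have hbddG : ∀ ν : IPMspace X, BddAbove ((fun x : X => dist x x₀) '' IPMsupp ν.1) :=
    fun ν => ((supp_isClosed ν.1).isCompact.image hcontf).bddAbove
  have hG0 : ∀ ν : IPMspace X, 0 ≤ G ν := by
    intro ν
    obtain ⟨p, hp⟩ := supp_nonempty ν.2
    exact le_trans dist_nonneg (le_csSup (hbddG ν) ⟨p, hp, rfl⟩)
  -- (a1) supports of members of Spt N lie in supp μ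
  have ha1 : ∀ ν' : IPMspace X, ν' ∈ Spt N → IPMsupp ν'.1 ⊆ IPMsupp μ := by
    rintro ν' ⟨c, hc⟩
    rw [supp_eq ν'.2]
    refine closure_minimal ?_ (supp_isClosed μ)
    rintro x ⟨c', hc'⟩
    by_contra hxμ
    obtain ⟨g, hg0, hg1, -⟩ := exists_continuous_zero_one_of_isClosed (supp_isClosed μ)
      isClosed_singleton (Set.disjoint_singleton_right.2 hxμ)
    obtain ⟨n, hn⟩ := exists_nat_gt (-(c + c'))
    set φn : C(X, ℝ) := (n : ℝ) • g + ContinuousMap.const X (-(n : ℝ)) with hφn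
    have h0 : φn x = 0 := by simp [hφn, hg1 (Set.mem_singleton x)]
    have hc'n := hc' φn h0
    have hμφn : μ φn = -(n : ℝ) := by
      rw [hφn, hμ.2.1]
      have hz : μ ((n : ℝ) • g) = 0 := by
        have heq : Set.EqOn ((n : ℝ) • g) (ContinuousMap.const X (0 : ℝ))
            (closure (Spt μ)) := by
          rw [← supp_eq hμ]
          intro p hp
          simp [hg0 hp]
        rw [eqOn_closure hμ heq, hμ.1]
      rw [hz]; ring
    have hΨ0 : (barFn φn + ContinuousMap.const (IPMspace X) (-(ν'.1 φn))) ν' = 0 := by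
      simp [barFn]
    have hNb := hc _ hΨ0
    have hNval : N (barFn φn + ContinuousMap.const (IPMspace X) (-(ν'.1 φn))) =
        μ φn - ν'.1 φn := by
      rw [sub_const hN]
      have hb2 := congrFun hbar φn
      rw [← hb2]
      rfl
    rw [hNval, hμφn] at hNb
    linarith
  -- f as a continuous map
  set f : C(X, ℝ) := ⟨fun x : X => dist x x₀, hcontf⟩ with hfdef
  -- (a3)
  have ha3 : ∀ n : ℕ, ∀ ν : IPMspace X, ν ∈ IPMsupp N → ν.1 ((n : ℝ) • f) ≤ n * R := by
    intro n
    have hclosed : IsClosed {ν : IPMspace X | ν.1 ((n : ℝ) • f) ≤ n * R} :=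
      isClosed_le ((continuous_apply ((n : ℝ) • f)).comp continuous_subtype_val)
        continuous_const
    have hS : Spt N ⊆ {ν : IPMspace X | ν.1 ((n : ℝ) • f) ≤ n * R} := by
      intro ν' hν'
      have hsub := ha1 ν' hν'
      have h1 : ν'.1 ((n : ℝ) • f) ≤ sSup (((n : ℝ) • f) '' IPMsupp ν'.1) :=
        le_sSup_supp ν'.2 _
      refine h1.trans (Real.sSup_le ?_ (mul_nonneg (Nat.cast_nonneg n) hR0))
      rintro - ⟨p, hp, rfl⟩
      have hpR : dist p x₀ ≤ R := le_csSup hbddR ⟨p, hsub hp, rfl⟩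
      show ((n : ℝ) • f) p ≤ (n : ℝ) * R
      have hv : ((n : ℝ) • f) p = (n : ℝ) * dist p x₀ := rfl
      rw [hv]
      exact mul_le_mul_of_nonneg_left hpR (Nat.cast_nonneg n)
    intro ν hν
    have hsub2 : IPMsupp N ⊆ {ν : IPMspace X | ν.1 ((n : ℝ) • f) ≤ n * R} := by
      rw [supp_eq hN]
      exact closure_minimal hS hclosed
    exact hsub2 hν
  -- (a4)
  have ha4 : ∀ ν : IPMspace X, ν ∈ IPMsupp N → ∀ x ∈ IPMsupp ν.1, dist x x₀ ≤ R := by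
    intro ν hν
    have hT : IsClosed {x : X | dist x x₀ ≤ R} := isClosed_le hcontf continuous_const
    have hS : Spt ν.1 ⊆ {x : X | dist x x₀ ≤ R} := by
      rintro x ⟨c, hc⟩
      have hc0 : c ≤ 0 := spt_c_nonpos ν.2 hc
      by_contra hxR
      simp only [mem_setOf_eq, not_le] at hxR
      have hdpos : 0 < dist x x₀ - R := by linarith
      obtain ⟨n, hn⟩ := exists_nat_gt (-c / (dist x x₀ - R))
      have h1 : ((n : ℝ) • f) x + c ≤ ν.1 ((n : ℝ) • f) := spt_le ν.2 hc _
      have h2 := ha3 n ν hν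
      have hv : ((n : ℝ) • f) x = (n : ℝ) * dist x x₀ := rfl
      rw [hv] at h1
      have h4 : -c / (dist x x₀ - R) * (dist x x₀ - R) < (n : ℝ) * (dist x x₀ - R) :=
        mul_lt_mul_of_pos_right hn hdpos
      rw [div_mul_cancel₀ _ (ne_of_gt hdpos)] at h4
      nlinarith
    intro x hx
    have hsub2 : IPMsupp ν.1 ⊆ {x : X | dist x x₀ ≤ R} := by
      rw [supp_eq ν.2]
      exact closure_minimal hS hT
    exact hsub2 hx
  have hGle : ∀ ν : IPMspace X, ν ∈ IPMsupp N → G ν ≤ R := by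
    intro ν hν
    refine Real.sSup_le ?_ hR0
    rintro - ⟨p, hp, rfl⟩
    exact ha4 ν hν p hp
  -- Q and (b)
  set Q : ℝ := sSup (G '' IPMsupp N) with hQdef
  have hbddQ : BddAbove (G '' IPMsupp N) := by
    refine ⟨R, ?_⟩
    rintro - ⟨ν, hν, rfl⟩
    exact hGle ν hν
  have hQ0 : 0 ≤ Q := by
    obtain ⟨ν₀, hν₀⟩ := supp_nonempty hN
    exact le_trans (hG0 ν₀) (le_csSup hbddQ ⟨ν₀, hν₀, rfl⟩)
  have hb : ∀ x ∈ IPMsupp μ, dist x x₀ ≤ Q := by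
    have hK : IsClosed {y : X | dist y x₀ ≤ Q} := isClosed_le hcontf continuous_const
    have hS : Spt μ ⊆ {y : X | dist y x₀ ≤ Q} := by
      rintro x ⟨c, hc⟩
      by_contra hxK
      obtain ⟨g, hg0, hg1, -⟩ := exists_continuous_zero_one_of_isClosed hK isClosed_singleton
        (Set.disjoint_singleton_right.2 hxK)
      obtain ⟨n, hn⟩ := exists_nat_gt (-c)
      set ψn : C(X, ℝ) := (n : ℝ) • g + ContinuousMap.const X (-(n : ℝ)) with hψn
      have h0 : ψn x = 0 := by simp [hψn, hg1 (Set.mem_singleton x)]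
      have hcn := hc ψn h0
      have hμψ : μ ψn = -(n : ℝ) := by
        have h1 : μ ψn = N (barFn ψn) := (congrFun hbar ψn).symm
        have heq : Set.EqOn (barFn ψn) (ContinuousMap.const (IPMspace X) (-(n : ℝ)))
            (closure (Spt N)) := by
          rw [← supp_eq hN]
          intro ν hν
          show ν.1 ψn = -(n : ℝ)
          have hsubK : IPMsupp ν.1 ⊆ {y : X | dist y x₀ ≤ Q} := by
            intro p hp
            have hp1 : dist p x₀ ≤ G ν := le_csSup (hbddG ν) ⟨p, hp, rfl⟩
            have hp2 : G ν ≤ Q := le_csSup hbddQ ⟨ν, hν, rfl⟩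
            exact le_trans hp1 hp2
          have hzero : ν.1 ((n : ℝ) • g) = 0 := by
            have heq2 : Set.EqOn ((n : ℝ) • g) (ContinuousMap.const X (0 : ℝ))
                (closure (Spt ν.1)) := by
              rw [← supp_eq ν.2]
              intro p hp
              simp [hg0 (hsubK hp)]
            rw [eqOn_closure ν.2 heq2, ν.2.1]
          rw [hψn]
          rw [ν.2.2.1, hzero]
          ring
        rw [h1, eqOn_closure hN heq, hN.1]
      rw [hμψ] at hcn
      linarith
    intro x hx
    have hsub2 : IPMsupp μ ⊆ {y : X | dist y x₀ ≤ Q} := by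
      rw [supp_eq hμ]
      exact closure_minimal hS hK
    exact hsub2 hx
  have hRQ : R ≤ Q := by
    refine Real.sSup_le ?_ hQ0
    rintro - ⟨x, hx, rfl⟩
    exact hb x hx
  have hQR : Q ≤ R := by
    refine Real.sSup_le ?_ hR0
    rintro - ⟨ν, hν, rfl⟩
    exact hGle ν hν
  rw [part3, h2, hGfun]
  exact le_antisymm hQR hRQ
end
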